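/- arXiv:2111.07544 — 3 statements merged into one kernel-verified Lean document; each statement's English description precedes it below -/
import Mathlib

section
/- [Recursive structure, Part II, interval J_n, canonical] For every n ≥ 2 and every k with 1 ≤ k ≤ L_{2n-3}, the canonical digits of L_{2n+1} + L_{2n-2} + k are: c_{2n+1} = 1, c_{2n} = 0, c_{2n-1} = 0, c_{2n-2} = 1, c_{2n-3} = 0; c_i(L_{2n+1} + L_{2n-2} + k) = c_i(L_{2n-2} + k) for all i with -2n + 4 ≤ i ≤ 2n - 4; c_{-2n+3} = 0, c_{-2n+2} = 0, c_{-2n+1} = 1, c_{-2n} = 0, c_{-2n-1} = 0, c_{-2n-2} = 1; and c_i(L_{2n+1} + L_{2n-2} + k) = 0 for i > 2n + 1 and for i < -2n - 2. -/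
noncomputable section

attribute [local instance] Classical.propDecidable

/-- The golden mean φ = (1+√5)/2. -/
def goldenPhi : ℝ := (1 + Real.sqrt 5) / 2

/-- `c` is a phi-representation of `N`: a finitely supported digit function
`c : ℤ → ℕ` with digits ≤ 1 such that `N = ∑ i, c i * φ ^ i`. -/
def IsPhiRep (N : ℕ) (c : ℤ →₀ ℕ) : Prop :=
  (∀ i, c i ≤ 1) ∧ (c.sum fun i a => (a : ℝ) * goldenPhi ^ i) = N

/-- Bergman representation: no two consecutive digits equal 1. -/
def IsBergman (N : ℕ) (c : ℤ →₀ ℕ) : Prop :=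
  IsPhiRep N c ∧ ∀ i : ℤ, c (i + 1) * c i = 0

/-- Admissible representation: no two consecutive digits equal 1,
except possibly `c 1 = c 0 = 1`. -/
def IsAdmissible (N : ℕ) (c : ℤ →₀ ℕ) : Prop :=
  IsPhiRep N c ∧ ∀ i : ℤ, i ≠ 0 → c (i + 1) * c i = 0

/-- The Bergman representation of `N` (unique when `N ≥ 1`). -/
noncomputable def bergmanRep (N : ℕ) : ℤ →₀ ℕ :=
  if h : ∃ c, IsBergman N c then h.choose else 0

/-- The canonical representation of `N`: the admissible representation with
`c 1 = c 0 = 1` if such exists, and the Bergman representation otherwise. -/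
noncomputable def canonicalRep (N : ℕ) : ℤ →₀ ℕ :=
  if h : ∃ c, IsAdmissible N c ∧ c 1 = 1 ∧ c 0 = 1 then h.choose else bergmanRep N

/-- The Lucas numbers: L 0 = 2, L 1 = 1, L (n+2) = L (n+1) + L n. -/
def lucas : ℕ → ℕ
  | 0 => 2
  | 1 => 1
  | n + 2 => lucas (n + 1) + lucas n

namespace Stmt12

open Finset goldenRatio Real

lemma goldenPhi_eq : goldenPhi = goldenRatio := rfl

/-- finset phi-sum -/
def sf (s : Finset ℤ) : ℝ := ∑ i ∈ s, goldenRatio ^ i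
/-- finset psi-sum -/
def sg (s : Finset ℤ) : ℝ := ∑ i ∈ s, goldenConj ^ i
/-- no consecutive elements -/
def NC (s : Finset ℤ) : Prop := ∀ i ∈ s, i + 1 ∉ s
/-- no consecutive elements except possibly the pair (p+1, p) -/
def NCp (p : ℤ) (s : Finset ℤ) : Prop := ∀ i ∈ s, i ≠ p → i + 1 ∉ s

lemma NC.ncp {s : Finset ℤ} (h : NC s) (p : ℤ) : NCp p s := fun i hi _ => h i hi

lemma NCp.subset {s t : Finset ℤ} {p : ℤ} (h : NCp p t) (hst : s ⊆ t) : NCp p s :=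
  fun i hi hip hi1 => h i (hst hi) hip (hst hi1)

lemma NC.subset {s t : Finset ℤ} (h : NC t) (hst : s ⊆ t) : NC s :=
  fun i hi hi1 => h i (hst hi) (hst hi1)

lemma gp_pos (i : ℤ) : 0 < goldenRatio ^ i := zpow_pos goldenRatio_pos i

lemma gp_mono {i j : ℤ} (h : i ≤ j) : goldenRatio ^ i ≤ goldenRatio ^ j :=
  (zpow_le_zpow_iff_right₀ one_lt_goldenRatio).2 h

lemma gp_strict {i j : ℤ} (h : i < j) : goldenRatio ^ i < goldenRatio ^ j :=
  (zpow_lt_zpow_iff_right₀ one_lt_goldenRatio).2 h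

lemma gp_two : goldenRatio ^ (2:ℤ) = goldenRatio + 1 := by
  rw [show (2:ℤ) = ((2:ℕ):ℤ) by norm_num, zpow_natCast, goldenRatio_sq]

lemma gp_rec (i : ℤ) : goldenRatio ^ (i+2) = goldenRatio ^ (i+1) + goldenRatio ^ i := by
  rw [zpow_add₀ goldenRatio_ne_zero i 2, zpow_add₀ goldenRatio_ne_zero i 1, gp_two, zpow_one]; ring

lemma gc_two : goldenConj ^ (2:ℤ) = goldenConj + 1 := by
  rw [show (2:ℤ) = ((2:ℕ):ℤ) by norm_num, zpow_natCast, goldenConj_sq]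

lemma gc_rec (i : ℤ) : goldenConj ^ (i+2) = goldenConj ^ (i+1) + goldenConj ^ i := by
  rw [zpow_add₀ goldenConj_ne_zero i 2, zpow_add₀ goldenConj_ne_zero i 1, gc_two, zpow_one]; ring

lemma gc_zpow (i : ℤ) : goldenConj ^ i = (-1)^i * goldenRatio ^ (-i) := by
  have h : goldenConj = (-1) * goldenRatio⁻¹ := by rw [inv_goldenRatio]; ring
  rw [h, mul_zpow, zpow_neg, inv_zpow]

lemma gc_even {i : ℤ} (h : Even i) : goldenConj ^ i = goldenRatio ^ (-i) := by
  rw [gc_zpow, h.neg_one_zpow, one_mul]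

lemma gc_odd {i : ℤ} (h : Odd i) : goldenConj ^ i = -goldenRatio ^ (-i) := by
  rw [gc_zpow, h.neg_one_zpow]; ring

lemma gc_le (i : ℤ) : goldenConj ^ i ≤ goldenRatio ^ (-i) := by
  rcases Int.even_or_odd i with h | h
  · rw [gc_even h]
  · rw [gc_odd h]; linarith [gp_pos (-i)]

lemma gc_ge (i : ℤ) : -goldenRatio ^ (-i) ≤ goldenConj ^ i := by
  rcases Int.even_or_odd i with h | h
  · rw [gc_even h]; linarith [gp_pos (-i)]
  · rw [gc_odd h]

end Stmt12
namespace Stmt12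
open Finset goldenRatio Real

lemma sf_empty : sf ∅ = 0 := by simp [sf]

lemma sf_insert {s : Finset ℤ} {a : ℤ} (h : a ∉ s) :
    sf (insert a s) = goldenRatio ^ a + sf s := by
  simp [sf, Finset.sum_insert h]

lemma sf_erase {s : Finset ℤ} {a : ℤ} (h : a ∈ s) :
    sf s = goldenRatio ^ a + sf (s.erase a) := by
  rw [← sf_insert (Finset.notMem_erase a s), Finset.insert_erase h]

lemma sf_nonneg (s : Finset ℤ) : 0 ≤ sf s :=
  Finset.sum_nonneg fun i _ => (gp_pos i).le

lemma mem_le_sf {s : Finset ℤ} {a : ℤ} (h : a ∈ s) : goldenRatio ^ a ≤ sf s := by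
  rw [sf_erase h]; linarith [sf_nonneg (s.erase a)]

lemma sg_erase {s : Finset ℤ} {a : ℤ} (h : a ∈ s) :
    sg s = goldenConj ^ a + sg (s.erase a) := by
  rw [sg, sg, ← Finset.add_sum_erase _ _ h]

/-- B1: strict bound for no-consecutive sets -/
lemma sum_lt (s : Finset ℤ) : NC s → ∀ t : ℤ, (∀ i ∈ s, i ≤ t) → sf s < goldenRatio ^ (t+1) := by
  induction s using Finset.strongInduction with
  | _ s ih =>
    intro hnc t ht
    rcases s.eq_empty_or_nonempty with rfl | hne
    · simpa [sf_empty] using gp_pos (t+1)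
    · set m := s.max' hne with hm
      have hms : m ∈ s := s.max'_mem hne
      have herase : ∀ i ∈ s.erase m, i ≤ m - 2 := by
        intro i hi
        have h1 : i ∈ s := Finset.mem_of_mem_erase hi
        have h2 : i ≠ m := Finset.ne_of_mem_erase hi
        have h3 : i ≤ m := s.le_max' i h1
        have h4 : i ≠ m - 1 := by
          intro h; apply hnc i h1; rw [h]; simpa using hms
        omega
      have hlt : sf (s.erase m) < goldenRatio ^ (m-1) := by
        have := ih (s.erase m) (Finset.erase_ssubset hms) (hnc.subset (Finset.erase_subset _ _))
          (m-2) herase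
        rwa [show m-2+1 = m-1 by ring] at this
      have : sf s < goldenRatio ^ m + goldenRatio ^ (m-1) := by
        rw [sf_erase hms]; linarith
      calc sf s < goldenRatio ^ m + goldenRatio ^ (m-1) := this
        _ = goldenRatio ^ (m+1) := by
            have := gp_rec (m-1); simp only [show m-1+2 = m+1 by ring, show m-1+1 = m by ring] at this
            linarith
        _ ≤ goldenRatio ^ (t+1) := gp_mono (by have := ht m hms; omega)

/-- B2: bound for sets with no consecutive elements except possibly (p+1,p) -/
lemma sum_lt' {s : Finset ℤ} {p : ℤ} (hnc : NCp p s) {t : ℤ} (ht : ∀ i ∈ s, i ≤ t) :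
    sf s < goldenRatio ^ (t+1) + goldenRatio ^ p := by
  have hnc' : NC (s.erase p) := by
    intro i hi hi1
    have h1 : i ∈ s := Finset.mem_of_mem_erase hi
    have h2 : i ≠ p := Finset.ne_of_mem_erase hi
    exact hnc i h1 h2 (Finset.mem_of_mem_erase hi1)
  have hb : sf (s.erase p) < goldenRatio ^ (t+1) :=
    sum_lt _ hnc' t (fun i hi => ht i (Finset.mem_of_mem_erase hi))
  by_cases hp : p ∈ s
  · rw [sf_erase hp]; linarith
  · rw [Finset.erase_eq_of_notMem hp] at hb; linarith [gp_pos p]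

end Stmt12
namespace Stmt12
open Finset goldenRatio Real

/-- reflection -/
def rs (s : Finset ℤ) : Finset ℤ := s.image (fun i => -i)

lemma mem_rs {s : Finset ℤ} {j : ℤ} : j ∈ rs s ↔ -j ∈ s := by
  simp only [rs, Finset.mem_image]
  constructor
  · rintro ⟨i, hi, rfl⟩; simpa using hi
  · intro h; exact ⟨-j, h, by ring⟩

lemma sf_rs (s : Finset ℤ) : sf (rs s) = ∑ i ∈ s, goldenRatio ^ (-i) := by
  rw [sf, rs, Finset.sum_image (by intro a _ b _ h; exact neg_inj.1 h)]

lemma NC_of_even {u : Finset ℤ} (h : ∀ j ∈ u, Even j) : NC u := by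
  intro i hi hi1
  rcases h i hi with ⟨a, ha⟩
  rcases h (i+1) hi1 with ⟨b, hb⟩
  omega

lemma NC_of_odd {u : Finset ℤ} (h : ∀ j ∈ u, Odd j) : NC u := by
  intro i hi hi1
  rcases h i hi with ⟨a, ha⟩
  rcases h (i+1) hi1 with ⟨b, hb⟩
  omega

lemma sg_le_even (s : Finset ℤ) :
    sg s ≤ ∑ i ∈ s.filter (fun i => Even i), goldenRatio ^ (-i) := by
  rw [sg, ← Finset.sum_filter_add_sum_filter_not s (fun i => Even i)]
  have h1 : ∑ i ∈ s.filter (fun i => Even i), goldenConj ^ i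
      = ∑ i ∈ s.filter (fun i => Even i), goldenRatio ^ (-i) := by
    apply Finset.sum_congr rfl
    intro i hi
    exact gc_even (Finset.mem_filter.1 hi).2
  have h2 : ∑ i ∈ s.filter (fun i => ¬ Even i), goldenConj ^ i ≤ 0 := by
    apply Finset.sum_nonpos
    intro i hi
    have := (Finset.mem_filter.1 hi).2
    rw [gc_odd (Int.not_even_iff_odd.1 this)]
    linarith [gp_pos (-i)]
  linarith

lemma sg_ge_neg_odd (s : Finset ℤ) :
    -(∑ i ∈ s.filter (fun i => ¬ Even i), goldenRatio ^ (-i)) ≤ sg s := by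
  rw [sg, ← Finset.sum_filter_add_sum_filter_not s (fun i => Even i)]
  have h1 : ∑ i ∈ s.filter (fun i => ¬ Even i), goldenConj ^ i
      = -∑ i ∈ s.filter (fun i => ¬ Even i), goldenRatio ^ (-i) := by
    rw [← Finset.sum_neg_distrib]
    apply Finset.sum_congr rfl
    intro i hi
    exact gc_odd (Int.not_even_iff_odd.1 (Finset.mem_filter.1 hi).2)
  have h2 : (0:ℝ) ≤ ∑ i ∈ s.filter (fun i => Even i), goldenConj ^ i := by
    apply Finset.sum_nonneg
    intro i hi
    rw [gc_even (Finset.mem_filter.1 hi).2]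
    exact (gp_pos (-i)).le
  linarith

lemma sg_le_rs (s : Finset ℤ) : sg s ≤ sf (rs s) := by
  rw [sf_rs, sg]
  exact Finset.sum_le_sum (fun i _ => gc_le i)

/-- even-filtered reflected bound via B1 -/
lemma even_part_lt {s : Finset ℤ} {t : ℤ} (h : ∀ i ∈ s, Even i → -t ≤ i) :
    ∑ i ∈ s.filter (fun i => Even i), goldenRatio ^ (-i) < goldenRatio ^ (t+1) := by
  rw [← sf_rs]
  apply sum_lt _ (NC_of_even ?_) t ?_
  · intro j hj
    have h1 := mem_rs.1 hj
    have h2 : Even (-j) := (Finset.mem_filter.1 h1).2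
    rcases h2 with ⟨a, ha⟩
    exact ⟨-a, by omega⟩
  · intro j hj
    have h1 := mem_rs.1 hj
    have h2 := Finset.mem_filter.1 h1
    have := h _ h2.1 h2.2
    omega

lemma odd_part_lt {s : Finset ℤ} {t : ℤ} (h : ∀ i ∈ s, ¬ Even i → -t ≤ i) :
    ∑ i ∈ s.filter (fun i => ¬ Even i), goldenRatio ^ (-i) < goldenRatio ^ (t+1) := by
  rw [← sf_rs]
  apply sum_lt _ (NC_of_odd ?_) t ?_
  · intro j hj
    have h1 := mem_rs.1 hj
    have h2 := Finset.mem_filter.1 h1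
    rcases Int.not_even_iff_odd.1 h2.2 with ⟨a, ha⟩
    exact ⟨-a - 1, by omega⟩
  · intro j hj
    have h1 := mem_rs.1 hj
    have h2 := Finset.mem_filter.1 h1
    have := h _ h2.1 h2.2
    omega

end Stmt12
namespace Stmt12
open Finset goldenRatio Real

/-- If the minimum of `s` is odd, the conjugate sum is negative. -/
lemma sg_neg_of_odd_min {s : Finset ℤ} (hne : s.Nonempty) (hodd : Odd (s.min' hne)) :
    sg s < 0 := by
  set m := s.min' hne with hm
  have hms : m ∈ s := s.min'_mem hne
  rw [sg_erase hms, gc_odd hodd]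
  have h1 : sg (s.erase m) ≤ ∑ i ∈ (s.erase m).filter (fun i => Even i), goldenRatio ^ (-i) :=
    sg_le_even _
  have h2 : ∑ i ∈ (s.erase m).filter (fun i => Even i), goldenRatio ^ (-i)
      < goldenRatio ^ (-m) := by
    have := even_part_lt (s := s.erase m) (t := -m - 1) ?_
    · rwa [show -m-1+1 = -m by ring] at this
    · intro i hi _
      have h3 : i ∈ s := Finset.mem_of_mem_erase hi
      have h4 : i ≠ m := Finset.ne_of_mem_erase hi
      have h5 : m ≤ i := s.min'_le i h3
      omega
  linarith

/-- If the minimum of `s` is even (and `≠ 0` wrt the exceptional pair),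
the conjugate sum is bigger than `φ^(-m-1)`. -/
lemma sg_gt_of_even_min {s : Finset ℤ} (hne : s.Nonempty) (heven : Even (s.min' hne))
    (hnotnext : s.min' hne + 1 ∉ s) :
    goldenRatio ^ (-(s.min' hne) - 1) < sg s := by
  set m := s.min' hne with hm
  have hms : m ∈ s := s.min'_mem hne
  rw [sg_erase hms, gc_even heven]
  have h1 : -(∑ i ∈ (s.erase m).filter (fun i => ¬ Even i), goldenRatio ^ (-i))
      ≤ sg (s.erase m) := sg_ge_neg_odd _
  have h2 : ∑ i ∈ (s.erase m).filter (fun i => ¬ Even i), goldenRatio ^ (-i)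
      < goldenRatio ^ (-m - 2) := by
    have := odd_part_lt (s := s.erase m) (t := -m - 3) ?_
    · rwa [show -m-3+1 = -m-2 by ring] at this
    · intro i hi hodd
      have h3 : i ∈ s := Finset.mem_of_mem_erase hi
      have h4 : i ≠ m := Finset.ne_of_mem_erase hi
      have h5 : m ≤ i := s.min'_le i h3
      have h6 : i ≠ m + 1 := by rintro rfl; exact hnotnext h3
      rcases Int.not_even_iff_odd.1 hodd with ⟨a, ha⟩
      rcases heven with ⟨b, hb⟩
      omega
  have h3 : goldenRatio ^ (-m) - goldenRatio ^ (-m-2) = goldenRatio ^ (-m-1) := by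
    have := gp_rec (-m-2)
    rw [show -m-2+2 = -m by ring, show -m-2+1 = -m-1 by ring] at this
    linarith
  linarith

/-- Upper bound for conjugate sums with exceptional pair at 0. -/
lemma sg_lt_of_ge {s : Finset ℤ} (hnc : NCp 0 s) {a : ℤ} (ha : ∀ i ∈ s, a ≤ i) :
    sg s < goldenRatio ^ (-a + 1) + goldenRatio ^ (-1 : ℤ) := by
  have h1 : sg s ≤ sf (rs s) := sg_le_rs s
  have h2 : NCp (-1) (rs s) := by
    intro j hj hjne hj1
    have hm1 := mem_rs.1 hj
    have hm2 := mem_rs.1 hj1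
    have := hnc (-(j+1)) hm2 (by omega)
    rw [show -(j+1)+1 = -j by ring] at this
    exact this hm1
  have h3 : sf (rs s) < goldenRatio ^ (-a+1) + goldenRatio ^ (-1:ℤ) := by
    have := sum_lt' h2 (t := -a) ?_
    · rwa [show -a+1 = -a+1 by ring] at this
    · intro j hj
      have := ha _ (mem_rs.1 hj); omega
  linarith

/-- every integer power of φ (resp. ψ) has the form a + bφ (resp. a + bψ) -/
lemma conj_pair (i : ℤ) : ∃ a b : ℤ,
    goldenRatio ^ i = a + b * goldenRatio ∧ goldenConj ^ i = a + b * goldenConj := by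
  have hphi : goldenRatio * goldenRatio = goldenRatio + 1 := by
    have := goldenRatio_sq; rwa [sq] at this
  have hpsi : goldenConj * goldenConj = goldenConj + 1 := by
    have := goldenConj_sq; rwa [sq] at this
  induction i using Int.induction_on with
  | zero => exact ⟨1, 0, by norm_num, by norm_num⟩
  | succ n ih =>
    obtain ⟨a, b, h1, h2⟩ := ih
    refine ⟨b, a + b, ?_, ?_⟩
    · rw [zpow_add₀ goldenRatio_ne_zero _ 1, zpow_one, h1]
      push_cast; linear_combination (b : ℝ) * hphi
    · rw [zpow_add₀ goldenConj_ne_zero _ 1, zpow_one, h2]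
      push_cast; linear_combination (b : ℝ) * hpsi
  | pred n ih =>
    obtain ⟨a, b, h1, h2⟩ := ih
    refine ⟨b - a, a, ?_, ?_⟩
    · have hmul : goldenRatio ^ (-(n:ℤ) - 1) * goldenRatio = goldenRatio ^ (-(n:ℤ)) := by
        have h := zpow_add₀ goldenRatio_ne_zero (-(n:ℤ) - 1) 1
        rw [zpow_one] at h
        rw [← h]; norm_num
      apply mul_right_cancel₀ goldenRatio_ne_zero
      rw [hmul, h1]; push_cast; linear_combination (-(a : ℝ)) * hphi
    · have hmul : goldenConj ^ (-(n:ℤ) - 1) * goldenConj = goldenConj ^ (-(n:ℤ)) := by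
        have h := zpow_add₀ goldenConj_ne_zero (-(n:ℤ) - 1) 1
        rw [zpow_one] at h
        rw [← h]; norm_num
      apply mul_right_cancel₀ goldenConj_ne_zero
      rw [hmul, h2]; push_cast; linear_combination (-(a : ℝ)) * hpsi

lemma conj_sum (s : Finset ℤ) : ∃ a b : ℤ,
    sf s = a + b * goldenRatio ∧ sg s = a + b * goldenConj := by
  induction s using Finset.induction_on with
  | empty => exact ⟨0, 0, by simp [sf_empty], by simp [sg]⟩
  | @insert x s' hx ih =>
    obtain ⟨a, b, h1, h2⟩ := ih
    obtain ⟨c, d, h3, h4⟩ := conj_pair x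
    refine ⟨a + c, b + d, ?_, ?_⟩
    · rw [sf_insert hx, h1, h3]; push_cast; ring
    · rw [sg, Finset.sum_insert hx, ← sg, h2, h4]; push_cast; ring

/-- key conjugation identity: if the φ-sum is an integer, so is the ψ-sum. -/
lemma sg_eq_of_sf_int {s : Finset ℤ} {m : ℤ} (h : sf s = m) : sg s = m := by
  obtain ⟨a, b, h1, h2⟩ := conj_sum s
  have hb : b = 0 := by
    by_contra hb
    have h3 : (b:ℝ) * goldenRatio = ((m - a : ℤ) : ℝ) := by push_cast; linarith [h1.symm.trans h]
    have h4 : Irrational ((b:ℤ) * goldenRatio : ℝ) := goldenRatio_irrational.intCast_mul hb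
    rw [h3] at h4
    exact (m - a).not_irrational h4
  subst hb
  have h5 : (a : ℝ) = m := by rw [h1] at h; push_cast at h ⊢; linarith
  rw [h2]; push_cast; linarith

/-- Lucas numbers via golden ratio powers. -/
lemma lucas_real : ∀ m : ℕ, (lucas m : ℝ) = goldenRatio ^ (m:ℤ) + goldenConj ^ (m:ℤ) := by
  intro m
  induction m using Nat.twoStepInduction with
  | zero => norm_num [lucas]
  | one =>
    have h1 : lucas 1 = 1 := rfl
    rw [h1, show ((1:ℕ):ℤ) = (1:ℤ) by norm_num, zpow_one, zpow_one]
    push_cast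
    linarith [goldenRatio_add_goldenConj]
  | more n ih1 ih2 =>
    have : lucas (n+2) = lucas (n+1) + lucas n := rfl
    rw [this]
    push_cast
    rw [ih1, ih2, show ((n:ℤ)+2 : ℤ) = (n:ℤ) + 2 by push_cast; ring]
    rw [gp_rec, gc_rec]
    push_cast
    ring

lemma lucas_pos (m : ℕ) : 0 < lucas m := by
  induction m using Nat.twoStepInduction with
  | zero => norm_num [lucas]
  | one => norm_num [lucas]
  | more n ih1 ih2 => show 0 < lucas (n+1) + lucas n; omega

lemma lucas_self_le (m : ℕ) : m ≤ lucas m + 1 := by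
  induction m using Nat.twoStepInduction with
  | zero => norm_num [lucas]
  | one => norm_num [lucas]
  | more n ih1 ih2 =>
    have h1 : lucas (n+2) = lucas (n+1) + lucas n := rfl
    have := lucas_pos n
    have := lucas_pos (n+1)
    omega

end Stmt12
namespace Stmt12
open Finset goldenRatio Real

lemma NC_rs {s : Finset ℤ} (h : NC s) : NC (rs s) := by
  intro j hj hj1
  have h1 := mem_rs.1 hj
  have h2 := mem_rs.1 hj1
  have := h (-(j+1)) h2
  rw [show -(j+1)+1 = -j by ring] at this
  exact this h1

/-- Uniqueness of no-consecutive φ-representations of a real number. -/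
lemma sf_inj : ∀ s : Finset ℤ, NC s → ∀ t : Finset ℤ, NC t → sf s = sf t → s = t := by
  intro s
  induction s using Finset.strongInduction with
  | _ s ih =>
    intro hncs t hnct heq
    rcases s.eq_empty_or_nonempty with rfl | hs
    · rcases t.eq_empty_or_nonempty with rfl | ht
      · rfl
      · exfalso
        have h1 : goldenRatio ^ (t.max' ht) ≤ sf t := mem_le_sf (t.max'_mem ht)
        rw [← heq, sf_empty] at h1
        linarith [gp_pos (t.max' ht)]
    · rcases t.eq_empty_or_nonempty with rfl | ht
      · exfalso
        have h1 : goldenRatio ^ (s.max' hs) ≤ sf s := mem_le_sf (s.max'_mem hs)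
        rw [heq, sf_empty] at h1
        linarith [gp_pos (s.max' hs)]
      · set ms := s.max' hs with hms
        set mt := t.max' ht with hmt
        have hkey : ∀ (u v : Finset ℤ), NC u → NC v → (hu : u.Nonempty) → (hv : v.Nonempty) →
            sf u = sf v → u.max' hu < v.max' hv → False := by
          intro u v hncu _ hu hv hsum hlt
          have h1 : sf u < goldenRatio ^ (u.max' hu + 1) :=
            sum_lt u hncu _ (fun i hi => u.le_max' i hi)
          have h2 : goldenRatio ^ (u.max' hu + 1) ≤ goldenRatio ^ (v.max' hv) :=
            gp_mono (by omega)
          have h3 : goldenRatio ^ (v.max' hv) ≤ sf v := mem_le_sf (v.max'_mem hv)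
          linarith
        have hmm : ms = mt := by
          rcases lt_trichotomy ms mt with h | h | h
          · exact absurd h (fun h => hkey s t hncs hnct hs ht heq h)
          · exact h
          · exact absurd h (fun h => hkey t s hnct hncs ht hs heq.symm h)
        have hmem_s : ms ∈ s := s.max'_mem hs
        have hmem_t : ms ∈ t := by rw [hmm]; exact t.max'_mem ht
        have herase : sf (s.erase ms) = sf (t.erase ms) := by
          have h1 := sf_erase (s.max'_mem hs)
          have h2 := sf_erase (t.max'_mem ht)
          rw [← hms] at h1
          rw [← hmt, ← hmm] at h2
          rw [h1, h2] at heq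
          linarith
        have heq2 : s.erase ms = t.erase ms :=
          ih (s.erase ms) (Finset.erase_ssubset (s.max'_mem hs))
            (hncs.subset (Finset.erase_subset _ _)) _
            (hnct.subset (Finset.erase_subset _ _)) herase
        ext i
        by_cases hi : i = ms
        · subst hi
          simp [hmem_s, hmem_t]
        · constructor
          · intro h
            have : i ∈ s.erase ms := Finset.mem_erase.2 ⟨hi, h⟩
            rw [heq2] at this
            exact Finset.mem_of_mem_erase this
          · intro h
            have : i ∈ t.erase ms := Finset.mem_erase.2 ⟨hi, h⟩
            rw [← heq2] at this
            exact Finset.mem_of_mem_erase this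

lemma lucas_even_real {q : ℕ} (hq : Even q) :
    (lucas q : ℝ) = goldenRatio ^ (q:ℤ) + goldenRatio ^ (-(q:ℤ)) := by
  rw [lucas_real q, gc_even (Int.even_coe_nat q |>.2 hq)]

lemma lucas_odd_real {q : ℕ} (hq : Odd q) :
    (lucas q : ℝ) = goldenRatio ^ (q:ℤ) - goldenRatio ^ (-(q:ℤ)) := by
  rw [lucas_real q, gc_odd (Int.odd_coe_nat q |>.2 hq)]
  ring

/-- nonempty support -/
lemma rep_nonempty {s : Finset ℤ} {P : ℕ} (hP : 1 ≤ P) (hsum : sf s = P) : s.Nonempty := by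
  rcases s.eq_empty_or_nonempty with rfl | h
  · rw [sf_empty] at hsum
    have : (1:ℝ) ≤ (P:ℝ) := by exact_mod_cast hP
    linarith
  · exact h

/-- the minimum of a no-consecutive-with-exception representation of a positive integer is even -/
lemma rep_min_even {s : Finset ℤ} {P : ℕ} (hP : 1 ≤ P) (hsum : sf s = P)
    (hne : s.Nonempty) : Even (s.min' hne) := by
  by_contra hodd
  have h1 : sg s = P := sg_eq_of_sf_int (m := P) (by exact_mod_cast hsum)
  have h2 := sg_neg_of_odd_min hne (Int.not_even_iff_odd.1 hodd)
  have : (1:ℝ) ≤ (P:ℝ) := by exact_mod_cast hP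
  linarith

/-- telescoping tail representation -/
lemma tail_rep : ∀ (d : ℕ) (j : ℤ), ∃ u : Finset ℤ, NC u ∧
    (∀ i ∈ u, -2*j - 2*(d:ℤ) - 2 ≤ i ∧ i ≤ -2*j - 1) ∧
    sf u = goldenRatio ^ (-2*j) - goldenRatio ^ (-2*j - 2*(d:ℤ) - 1) := by
  intro d
  induction d with
  | zero =>
    intro j
    refine ⟨{-2*j - 2}, ?_, ?_, ?_⟩
    · intro i hi hi1
      simp only [Finset.mem_singleton] at hi hi1
      omega
    · intro i hi
      simp only [Finset.mem_singleton] at hi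
      push_cast
      omega
    · have h := gp_rec (-2*j - 2)
      rw [show -2*j-2+2 = -2*j by ring, show -2*j-2+1 = -2*j-1 by ring] at h
      simp only [sf, Finset.sum_singleton, Nat.cast_zero]
      rw [show -2*j - 2*(0:ℤ) - 1 = -2*j - 1 by ring]
      linarith
  | succ d ih =>
    intro j
    obtain ⟨u', hnc', hbd', hsum'⟩ := ih (j+1)
    have hmem : -2*j - 1 ∉ u' := by
      intro h
      have := (hbd' _ h).2
      omega
    refine ⟨insert (-2*j - 1) u', ?_, ?_, ?_⟩
    · intro i hi hi1
      rcases Finset.mem_insert.1 hi with rfl | hi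
      · rcases Finset.mem_insert.1 hi1 with h | h
        · omega
        · have := (hbd' _ h).2; omega
      · rcases Finset.mem_insert.1 hi1 with h | h
        · have := (hbd' _ hi).2; omega
        · exact hnc' i hi h
    · intro i hi
      rcases Finset.mem_insert.1 hi with rfl | hi
      · push_cast; omega
      · have := hbd' _ hi; push_cast at this ⊢; omega
    · rw [sf_insert hmem, hsum']
      have := gp_rec (-2*j - 2)
      rw [show -2*j-2+2 = -2*j by ring, show -2*j-2+1 = -2*j-1 by ring] at this
      have he : -2*((j:ℤ)+1) = -2*j - 2 := by ring
      rw [he]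
      push_cast
      rw [show -2*(j:ℤ) - 2 - 2*(d:ℤ) - 1 = -2*j - 2*((d:ℤ)+1) - 1 by ring] at *
      linarith

end Stmt12
namespace Stmt12
open Finset goldenRatio Real

lemma gpm1 : goldenRatio ^ (-1:ℤ) = goldenRatio - 1 := by
  have h := gp_rec (-1)
  rw [show (-1:ℤ)+2 = 1 by ring, show (-1:ℤ)+1 = 0 by ring, zpow_one, zpow_zero] at h
  linarith

lemma gpm2 : goldenRatio ^ (-2:ℤ) = 2 - goldenRatio := by
  have h := gp_rec (-2)
  rw [show (-2:ℤ)+2 = 0 by ring, show (-2:ℤ)+1 = -1 by ring, zpow_zero, gpm1] at h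
  linarith

lemma rep_lt_of_lt {t : Finset ℤ} {x : ℝ} (hsum : sf t = x) {u : ℤ}
    (h : x < goldenRatio ^ u) : ∀ i ∈ t, i < u := by
  intro i hi
  have h1 : goldenRatio ^ i ≤ x := hsum ▸ mem_le_sf hi
  exact (zpow_lt_zpow_iff_right₀ one_lt_goldenRatio).1 (lt_of_le_of_lt h1 h)

lemma rep_min_ge {t : Finset ℤ} (hnc : NC t) (hne : t.Nonempty) {k : ℕ} (hk : 1 ≤ k)
    (hsum : sf t = k) {b : ℤ} (hb : (k:ℝ) < goldenRatio ^ (2*b+1)) :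
    -(2*b) ≤ t.min' hne := by
  by_contra h
  push_neg at h
  have heven := rep_min_even hk hsum hne
  have hle : t.min' hne ≤ -2*b - 2 := by rcases heven with ⟨r, hr⟩; omega
  have hsg : sg t = k := sg_eq_of_sf_int (m := k) (by exact_mod_cast hsum)
  have hgt := sg_gt_of_even_min hne heven (hnc _ (t.min'_mem hne))
  have hmono : goldenRatio ^ (2*b+1) ≤ goldenRatio ^ (-(t.min' hne) - 1) := gp_mono (by omega)
  rw [hsg] at hgt
  linarith

lemma rep_min_nonpos {t : Finset ℤ} (hnc : NC t) (hne : t.Nonempty) {k : ℕ} (hk : 1 ≤ k)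
    (hsum : sf t = k) : t.min' hne ≤ 0 := by
  by_contra h
  push_neg at h
  have h1 : sg t = k := sg_eq_of_sf_int (m := k) (by exact_mod_cast hsum)
  have h2 : sg t ≤ sf (rs t) := sg_le_rs t
  have h3 : sf (rs t) < goldenRatio ^ ((-1:ℤ)+1) := by
    apply sum_lt _ (NC_rs hnc) (-1)
    intro j hj
    have h4 := mem_rs.1 hj
    have h5 := t.min'_le _ h4
    omega
  rw [show (-1:ℤ)+1 = 0 by ring, zpow_zero] at h3
  have : (1:ℝ) ≤ (k:ℝ) := by exact_mod_cast hk
  linarith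

lemma lucas_two : lucas 2 = 3 := rfl

/-- Existence of Bergman (no-consecutive) representations of positive integers. -/
lemma exists_rep : ∀ P : ℕ, 1 ≤ P → ∃ s : Finset ℤ, NC s ∧ sf s = P := by
  intro P
  induction P using Nat.strong_induction_on with
  | _ P ih =>
  intro hP
  by_cases hP3 : P ≤ 3
  · interval_cases P
    · refine ⟨{0}, ?_, ?_⟩
      · intro i hi hi1
        simp only [Finset.mem_singleton] at hi hi1; omega
      · simp [sf]
    · refine ⟨{1, -2}, ?_, ?_⟩
      · intro i hi hi1
        simp only [Finset.mem_insert, Finset.mem_singleton] at hi hi1; omega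
      · have h1 : (1:ℤ) ∉ ({-2} : Finset ℤ) := by norm_num
        rw [show ({1, -2} : Finset ℤ) = insert 1 {-2} by rfl, sf_insert h1]
        simp only [sf, Finset.sum_singleton, zpow_one, gpm2]
        norm_num
    · refine ⟨{2, -2}, ?_, ?_⟩
      · intro i hi hi1
        simp only [Finset.mem_insert, Finset.mem_singleton] at hi hi1; omega
      · have h1 : (2:ℤ) ∉ ({-2} : Finset ℤ) := by norm_num
        rw [show ({2, -2} : Finset ℤ) = insert 2 {-2} by rfl, sf_insert h1]
        simp only [sf, Finset.sum_singleton, gp_two, gpm2]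
        ring_nf
  · push_neg at hP3
    obtain ⟨m', hlow, hup⟩ : ∃ m', lucas (2*(m'+1)) < P ∧ P ≤ lucas (2*(m'+1)+2) := by
      classical
      set Q : ℕ → Prop := fun j => lucas (2*j) < P with hQ
      set m := Nat.findGreatest Q P with hm
      have hQ1 : Q 1 := by
        show lucas 2 < P
        rw [lucas_two]; omega
      have hm1 : 1 ≤ m := Nat.le_findGreatest (by omega) hQ1
      have hlow : lucas (2*m) < P := Nat.findGreatest_spec (m := 1) (by omega) hQ1
      have hup : P ≤ lucas (2*m+2) := by
        by_contra h
        push_neg at h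
        have hmP : m + 1 ≤ P := by
          have h1 : m ≤ P := hm ▸ Nat.findGreatest_le P
          rcases eq_or_lt_of_le h1 with h2 | h2
          · exfalso
            have h3 := lucas_self_le (2*m)
            omega
          · omega
        have := Nat.findGreatest_is_greatest (P := Q) (n := P) (k := m+1) (by omega) hmP
        exact this (show lucas (2*(m+1)) < P by rw [show 2*(m+1) = 2*m+2 by ring]; omega)
      exact ⟨m - 1, by rw [show m - 1 + 1 = m by omega]; exact hlow,
        by rw [show m - 1 + 1 = m by omega]; rw [show 2*m+2 = 2*m+2 by rfl] at hup; exact hup⟩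
    have hrec3 : lucas (2*m'+3) = lucas (2*m'+2) + lucas (2*m'+1) := rfl
    have hrec4 : lucas (2*m'+4) = lucas (2*m'+3) + lucas (2*m'+2) := rfl
    rw [show 2*(m'+1) = 2*m'+2 by ring] at hlow
    rw [show 2*(m'+1)+2 = 2*m'+4 by ring] at hup
    by_cases hcase : P ≤ lucas (2*m'+3)
    · -- even-type interval : P = lucas(2m'+2) + k
      set k := P - lucas (2*m'+2) with hk
      have hk1 : 1 ≤ k := by omega
      have hkP : k < P := by have := lucas_pos (2*m'+2); omega
      have hkle : k ≤ lucas (2*m'+1) := by omega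
      obtain ⟨t, hnct, hsumt⟩ := ih k hkP hk1
      have htne := rep_nonempty hk1 hsumt
      have hkphi : (k:ℝ) < goldenRatio ^ (2*(m':ℤ)+1) := by
        have h2 : (k:ℝ) ≤ (lucas (2*m'+1):ℝ) := by exact_mod_cast hkle
        have h3 : (lucas (2*m'+1):ℝ) < goldenRatio ^ (2*(m':ℤ)+1) := by
          rw [lucas_odd_real ⟨m', by ring⟩]
          push_cast
          linarith [gp_pos (-(2*(m':ℤ)+1))]
        linarith
      have htop : ∀ i ∈ t, i ≤ 2*(m':ℤ) := by
        intro i hi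
        have := rep_lt_of_lt hsumt hkphi i hi
        omega
      have hminge : -(2*(m':ℤ)) ≤ t.min' htne := rep_min_ge hnct htne hk1 hsumt hkphi
      have hbd : ∀ i ∈ t, -(2*(m':ℤ)) ≤ i ∧ i ≤ 2*(m':ℤ) := by
        intro i hi
        exact ⟨le_trans hminge (t.min'_le i hi), htop i hi⟩
      have hm2 : (-(2*(m':ℤ))-2) ∉ t := fun h => by have := (hbd _ h).1; omega
      have hm3 : (2*(m':ℤ)+2) ∉ insert (-(2*(m':ℤ))-2) t := by
        intro h
        rcases Finset.mem_insert.1 h with h | h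
        · omega
        · have := (hbd _ h).2; omega
      refine ⟨insert (2*(m':ℤ)+2) (insert (-(2*(m':ℤ))-2) t), ?_, ?_⟩
      · intro i hi hi1
        rcases Finset.mem_insert.1 hi with rfl | hi
        · rcases Finset.mem_insert.1 hi1 with h | h
          · omega
          · rcases Finset.mem_insert.1 h with h | h
            · omega
            · have := (hbd _ h).2; omega
        · rcases Finset.mem_insert.1 hi with rfl | hi
          · rcases Finset.mem_insert.1 hi1 with h | h
            · omega
            · rcases Finset.mem_insert.1 h with h | h
              · omega
              · have := (hbd _ h).1; omega
          · rcases Finset.mem_insert.1 hi1 with h | h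
            · have := (hbd _ hi).2; omega
            · rcases Finset.mem_insert.1 h with h | h
              · have := (hbd _ hi).1; omega
              · exact hnct i hi h
      · rw [sf_insert hm3, sf_insert hm2, hsumt]
        have hPk : (P:ℝ) = (lucas (2*m'+2):ℝ) + (k:ℝ) := by
          have : P = lucas (2*m'+2) + k := by omega
          rw [this]; push_cast; ring
        rw [hPk, lucas_even_real ⟨m'+1, by ring⟩]
        push_cast
        ring
    · -- odd-type interval : P = lucas(2m'+3) + k
      push_neg at hcase
      set k := P - lucas (2*m'+3) with hk
      have hk1 : 1 ≤ k := by omega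
      have hkP : k < P := by have := lucas_pos (2*m'+3); omega
      have hkle : k ≤ lucas (2*m'+2) := by omega
      by_cases hkmax : k = lucas (2*m'+2)
      · -- P = lucas (2m'+4)
        have hPeq : P = lucas (2*m'+4) := by omega
        have hm4 : (2*(m':ℤ)+4) ∉ ({-(2*(m':ℤ))-4} : Finset ℤ) := by
          simp only [Finset.mem_singleton]; omega
        refine ⟨insert (2*(m':ℤ)+4) {-(2*(m':ℤ))-4}, ?_, ?_⟩
        · intro i hi hi1
          simp only [Finset.mem_insert, Finset.mem_singleton] at hi hi1
          omega
        · rw [sf_insert hm4]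
          simp only [sf, Finset.sum_singleton]
          rw [hPeq, lucas_even_real ⟨m'+2, by ring⟩]
          push_cast
          ring_nf
      · -- k < lucas (2m'+2)
        have hklt : k < lucas (2*m'+2) := by omega
        obtain ⟨t, hnct, hsumt⟩ := ih k hkP hk1
        have htne := rep_nonempty hk1 hsumt
        have hkphi : (k:ℝ) < goldenRatio ^ (2*(m':ℤ)+2) := by
          have h2 : (k:ℝ) ≤ (lucas (2*m'+2):ℝ) - 1 := by
            have : (k:ℝ) + 1 ≤ (lucas (2*m'+2):ℝ) := by exact_mod_cast hklt
            linarith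
          have h3 : (lucas (2*m'+2):ℝ) - 1 < goldenRatio ^ (2*(m':ℤ)+2) := by
            rw [lucas_even_real ⟨m'+1, by ring⟩]
            push_cast
            have : goldenRatio ^ (-(2*(m':ℤ)+2)) < 1 := by
              have := gp_strict (show -(2*(m':ℤ)+2) < 0 by omega)
              rwa [zpow_zero] at this
            linarith
          linarith
        have hkphi' : (k:ℝ) < goldenRatio ^ (2*((m':ℤ)+1)+1) := by
          have := gp_strict (show (2*(m':ℤ)+2) < 2*((m':ℤ)+1)+1 by omega)
          linarith
        have htop : ∀ i ∈ t, i ≤ 2*(m':ℤ)+1 := by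
          intro i hi
          have := rep_lt_of_lt hsumt hkphi i hi
          omega
        have hminge : -(2*((m':ℤ)+1)) ≤ t.min' htne := rep_min_ge hnct htne hk1 hsumt hkphi'
        have hminle : t.min' htne ≤ 0 := rep_min_nonpos hnct htne hk1 hsumt
        have hmineven := rep_min_even hk1 hsumt htne
        obtain ⟨j, hj⟩ : ∃ j : ℤ, t.min' htne = -2*j := by
          rcases hmineven with ⟨r, hr⟩; exact ⟨-r, by omega⟩
        have hj0 : 0 ≤ j := by omega
        have hjm : j ≤ (m':ℤ)+1 := by omega
        obtain ⟨d, hd⟩ : ∃ d : ℕ, (j:ℤ) + d = (m':ℤ) + 1 := ⟨((m':ℤ)+1-j).toNat, by omega⟩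
        obtain ⟨u, hncu, hbdu, hsumu⟩ := tail_rep d j
        have hminmem : (-2*j : ℤ) ∈ t := by rw [← hj]; exact t.min'_mem htne
        have hnext : (-2*j+1 : ℤ) ∉ t := by
          have hh := hnct _ (t.min'_mem htne)
          rwa [hj] at hh
        set t' := t.erase (-2*j) with ht'
        have hbdt' : ∀ i ∈ t', -2*j+2 ≤ i ∧ i ≤ 2*(m':ℤ)+1 := by
          intro i hi
          have h1 : i ∈ t := Finset.mem_of_mem_erase hi
          have h2 : i ≠ -2*j := Finset.ne_of_mem_erase hi
          have h3 : t.min' htne ≤ i := t.min'_le i h1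
          have h4 : i ≠ -2*j + 1 := by
            intro hgg; exact hnext (hgg ▸ h1)
          refine ⟨by omega, htop i h1⟩
        have hdisj : Disjoint t' u := by
          rw [Finset.disjoint_left]
          intro i hit hiu
          have := (hbdt' i hit).1
          have := (hbdu i hiu).2
          omega
        have hnotin : (2*(m':ℤ)+3) ∉ t' ∪ u := by
          intro h
          rcases Finset.mem_union.1 h with h | h
          · have := (hbdt' _ h).2; omega
          · have := (hbdu _ h).2; omega
        refine ⟨insert (2*(m':ℤ)+3) (t' ∪ u), ?_, ?_⟩
        · intro i hi hi1
          rcases Finset.mem_insert.1 hi with rfl | hi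
          · rcases Finset.mem_insert.1 hi1 with h | h
            · omega
            · rcases Finset.mem_union.1 h with h | h
              · have := (hbdt' _ h).2; omega
              · have := (hbdu _ h).2; omega
          · rcases Finset.mem_insert.1 hi1 with h | h
            · rcases Finset.mem_union.1 hi with h2 | h2
              · have := (hbdt' _ h2).2; omega
              · have := (hbdu _ h2).2; omega
            · rcases Finset.mem_union.1 hi with h2 | h2
              · rcases Finset.mem_union.1 h with h3 | h3
                · exact hnct i (Finset.mem_of_mem_erase h2) (Finset.mem_of_mem_erase h3)
                · have := (hbdt' _ h2).1; have := (hbdu _ h3).2; omega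
              · rcases Finset.mem_union.1 h with h3 | h3
                · have := (hbdu _ h2).2; have := (hbdt' _ h3).1
                  have h5 := (hbdu _ h2).1; omega
                · exact hncu i h2 h3
        · rw [sf_insert hnotin, sf, Finset.sum_union hdisj, ← sf, ← sf, hsumu]
          have hsf' : sf t' = (k:ℝ) - goldenRatio ^ (-2*j) := by
            have h0 := sf_erase hminmem
            rw [hsumt] at h0
            linarith
          rw [hsf']
          have hPk : (P:ℝ) = (lucas (2*m'+3):ℝ) + (k:ℝ) := by
            have : P = lucas (2*m'+3) + k := by omega
            rw [this]; push_cast; ring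
          rw [hPk, lucas_odd_real ⟨m'+1, by ring⟩]
          rw [show -2*(j:ℤ) - 2*(d:ℤ) - 1 = -((2*m'+3 : ℕ):ℤ) by push_cast; omega]
          push_cast
          ring
end Stmt12
namespace Stmt12
open Finset goldenRatio Real

lemma two_mem_le_sf {s : Finset ℤ} {a b : ℤ} (ha : a ∈ s) (hb : b ∈ s) (hab : b ≠ a) :
    goldenRatio ^ a + goldenRatio ^ b ≤ sf s := by
  rw [sf_erase ha]
  have hbe : b ∈ s.erase a := Finset.mem_erase.2 ⟨hab, hb⟩
  linarith [mem_le_sf hbe]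

lemma gp_neg_lt_one {a : ℤ} (ha : 0 < a) : goldenRatio ^ (-a) < 1 := by
  have := gp_strict (show -a < 0 by omega)
  rwa [zpow_zero] at this

/-- Structure of admissible representations of integers in `(L_{2q}, L_{2q+1}]`. -/
lemma structM {s : Finset ℤ} (hnc : NCp 0 s) {q : ℕ} (hq : 1 ≤ q) {M : ℕ}
    (h1 : lucas (2*q) < M) (h2 : M ≤ lucas (2*q+1)) (hsum : sf s = M) :
    (∀ i ∈ s, -(2*(q:ℤ)) ≤ i ∧ i ≤ 2*(q:ℤ)) ∧ (2*(q:ℤ)) ∈ s ∧ (2*(q:ℤ)-1) ∉ s ∧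
    (-(2*(q:ℤ))) ∈ s ∧ (-(2*(q:ℤ))+1) ∉ s := by
  have hL2q : (lucas (2*q):ℝ) = goldenRatio ^ (2*(q:ℤ)) + goldenRatio ^ (-(2*(q:ℤ))) := by
    rw [lucas_even_real ⟨q, by ring⟩]; push_cast; ring_nf
  have hL2q1 : (lucas (2*q+1):ℝ)
      = goldenRatio ^ (2*(q:ℤ)+1) - goldenRatio ^ (-(2*(q:ℤ)+1)) := by
    rw [lucas_odd_real ⟨q, by ring⟩]; push_cast; ring_nf
  have hM1 : (lucas (2*q):ℝ) + 1 ≤ (M:ℝ) := by exact_mod_cast h1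
  have hM2 : (M:ℝ) ≤ (lucas (2*q+1):ℝ) := by exact_mod_cast h2
  have hMpos : 1 ≤ M := by have := lucas_pos (2*q); omega
  have hne : s.Nonempty := rep_nonempty hMpos hsum
  -- top bound
  have htopb : (M:ℝ) < goldenRatio ^ (2*(q:ℤ)+1) := by
    rw [hL2q1] at hM2
    linarith [gp_pos (-(2*(q:ℤ)+1))]
  have htop : ∀ i ∈ s, i ≤ 2*(q:ℤ) := by
    intro i hi
    have := rep_lt_of_lt hsum htopb i hi
    omega
  -- 2q ∈ s
  have hq_mem : (2*(q:ℤ)) ∈ s := by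
    by_contra hmem
    have hb : ∀ i ∈ s, i ≤ 2*(q:ℤ) - 1 := by
      intro i hi
      have := htop i hi
      rcases eq_or_lt_of_le this with h | h
      · exact absurd (h ▸ hi) hmem
      · omega
    have := sum_lt' hnc hb
    rw [hsum, show 2*(q:ℤ)-1+1 = 2*(q:ℤ) by ring, zpow_zero] at this
    rw [hL2q] at hM1
    linarith [gp_pos (-(2*(q:ℤ)))]
  have hq_1 : (2*(q:ℤ)-1) ∉ s := by
    intro h
    have := hnc _ h (by omega)
    rw [show 2*(q:ℤ)-1+1 = 2*(q:ℤ) by ring] at this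
    exact this hq_mem
  -- bottom
  have hsg : sg s = M := sg_eq_of_sf_int (m := M) (by exact_mod_cast hsum)
  have hmin_le : s.min' hne ≤ -(2*(q:ℤ)) + 1 := by
    by_contra h
    push_neg at h
    have hub := sg_lt_of_ge hnc (a := s.min' hne) (fun i hi => s.min'_le i hi)
    have hmono : goldenRatio ^ (-(s.min' hne)+1) ≤ goldenRatio ^ (2*(q:ℤ)) := gp_mono (by omega)
    have hsmall : goldenRatio ^ (-1:ℤ) < 1 := gp_neg_lt_one (by norm_num)
    rw [hsg] at hub
    rw [hL2q] at hM1
    linarith [gp_pos (-(2*(q:ℤ)))]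
  have hmineven := rep_min_even hMpos hsum hne
  have hmin_le2 : s.min' hne ≤ -(2*(q:ℤ)) := by
    rcases hmineven with ⟨r, hr⟩; omega
  have hmin_ge : -(2*(q:ℤ)) ≤ s.min' hne := by
    by_contra h
    push_neg at h
    have hle : s.min' hne ≤ -(2*(q:ℤ)) - 2 := by
      rcases hmineven with ⟨r, hr⟩; omega
    have hnext : s.min' hne + 1 ∉ s := hnc _ (s.min'_mem hne) (by omega)
    have hgt := sg_gt_of_even_min hne hmineven hnext
    have hmono : goldenRatio ^ (2*(q:ℤ)+1) ≤ goldenRatio ^ (-(s.min' hne)-1) := gp_mono (by omega)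
    rw [hsg] at hgt
    linarith
  have hmin_eq : s.min' hne = -(2*(q:ℤ)) := le_antisymm hmin_le2 hmin_ge
  have hq_mem' : (-(2*(q:ℤ))) ∈ s := hmin_eq ▸ s.min'_mem hne
  have hq_1' : (-(2*(q:ℤ))+1) ∉ s := hnc _ hq_mem' (by omega)
  exact ⟨fun i hi => ⟨hmin_eq ▸ s.min'_le i hi, htop i hi⟩, hq_mem, hq_1, hq_mem', hq_1'⟩

end Stmt12
namespace Stmt12
open Finset goldenRatio Real

/-- Structure of admissible representations of integers in
`(L_{2p+5} + L_{2p+2}, L_{2p+5} + L_{2p+3}]`. -/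
lemma structN {s : Finset ℤ} (hnc : NCp 0 s) {p : ℕ} {N : ℕ}
    (h1 : lucas (2*p+5) + lucas (2*p+2) < N) (h2 : N ≤ lucas (2*p+5) + lucas (2*p+3))
    (hsum : sf s = N) :
    (∀ i ∈ s, -(2*(p:ℤ))-6 ≤ i ∧ i ≤ 2*(p:ℤ)+5) ∧
    (2*(p:ℤ)+5) ∈ s ∧ (2*(p:ℤ)+4) ∉ s ∧ (2*(p:ℤ)+3) ∉ s ∧ (2*(p:ℤ)+2) ∈ s ∧
    (2*(p:ℤ)+1) ∉ s ∧
    (-(2*(p:ℤ))-1) ∉ s ∧ (-(2*(p:ℤ))-2) ∉ s ∧ (-(2*(p:ℤ))-3) ∈ s ∧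
    (-(2*(p:ℤ))-4) ∉ s ∧ (-(2*(p:ℤ))-5) ∉ s ∧ (-(2*(p:ℤ))-6) ∈ s := by
  set X := (p:ℤ) with hX
  have hX0 : 0 ≤ X := by positivity
  have hL5 : (lucas (2*p+5):ℝ) = goldenRatio ^ (2*X+5) - goldenRatio ^ (-(2*X)-5) := by
    rw [lucas_odd_real ⟨p+2, by ring⟩]; push_cast; ring_nf; rfl
  have hL3 : (lucas (2*p+3):ℝ) = goldenRatio ^ (2*X+3) - goldenRatio ^ (-(2*X)-3) := by
    rw [lucas_odd_real ⟨p+1, by ring⟩]; push_cast; ring_nf; rfl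
  have hL2 : (lucas (2*p+2):ℝ) = goldenRatio ^ (2*X+2) + goldenRatio ^ (-(2*X)-2) := by
    rw [lucas_even_real ⟨p+1, by ring⟩]; push_cast; ring_nf; rfl
  have hN1 : (lucas (2*p+5):ℝ) + (lucas (2*p+2):ℝ) + 1 ≤ (N:ℝ) := by exact_mod_cast h1
  have hN2 : (N:ℝ) ≤ (lucas (2*p+5):ℝ) + (lucas (2*p+3):ℝ) := by exact_mod_cast h2
  have hNpos : 1 ≤ N := by have := lucas_pos (2*p+5); omega
  have hne : s.Nonempty := rep_nonempty hNpos hsum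
  -- expansions
  have e1 : goldenRatio ^ (2*X+6) = goldenRatio ^ (2*X+5) + goldenRatio ^ (2*X+4) := by
    have := gp_rec (2*X+4)
    rwa [show 2*X+4+2 = 2*X+6 by ring, show 2*X+4+1 = 2*X+5 by ring] at this
  have e2 : goldenRatio ^ (2*X+4) = goldenRatio ^ (2*X+3) + goldenRatio ^ (2*X+2) := by
    have := gp_rec (2*X+2)
    rwa [show 2*X+2+2 = 2*X+4 by ring, show 2*X+2+1 = 2*X+3 by ring] at this
  -- step 1 : upper bound  N < φ^(2X+6)
  have hstep1 : (N:ℝ) < goldenRatio ^ (2*X+6) := by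
    rw [hL5, hL3] at hN2
    have h3 : goldenRatio ^ (2*X+3) < goldenRatio ^ (2*X+4) := gp_strict (by omega)
    have := gp_pos (-(2*X)-5)
    have := gp_pos (-(2*X)-3)
    linarith
  have htop : ∀ i ∈ s, i ≤ 2*X+5 := by
    intro i hi
    have := rep_lt_of_lt hsum hstep1 i hi
    omega
  -- step 2 : 2X+5 ∈ s
  have hNlow : goldenRatio ^ (2*X+5) + 1 < (N:ℝ) := by
    rw [hL5, hL2] at hN1
    have h3 : goldenRatio ^ (-(2*X)-5) < goldenRatio ^ (2*X+2) := gp_strict (by omega)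
    have := gp_pos (-(2*X)-2)
    linarith
  have hmem5 : (2*X+5) ∈ s := by
    by_contra hmem
    have hb : ∀ i ∈ s, i ≤ 2*X+4 := by
      intro i hi
      have := htop i hi
      rcases eq_or_lt_of_le this with h | h
      · exact absurd (h ▸ hi) hmem
      · omega
    have := sum_lt' hnc hb
    rw [hsum, show 2*X+4+1 = 2*X+5 by ring, zpow_zero] at this
    linarith
  have hno4 : (2*X+4) ∉ s := by
    intro h
    have := hnc _ h (by omega)
    rw [show 2*X+4+1 = 2*X+5 by ring] at this
    exact this hmem5
  -- step 4 : 2X+3 ∉ s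
  have hno3 : (2*X+3) ∉ s := by
    intro h
    have h4 := two_mem_le_sf hmem5 h (by omega)
    rw [hsum] at h4
    rw [hL5, hL3] at hN2
    have := gp_pos (-(2*X)-5)
    have := gp_pos (-(2*X)-3)
    linarith
  -- step 5 : 2X+2 ∈ s
  have hmem2 : (2*X+2) ∈ s := by
    by_contra hmem
    have hb : ∀ i ∈ s.erase (2*X+5), i ≤ 2*X+1 := by
      intro i hi
      have h3 : i ∈ s := Finset.mem_of_mem_erase hi
      have h4 : i ≠ 2*X+5 := Finset.ne_of_mem_erase hi
      have h5 := htop i h3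
      have h6 : i ≠ 2*X+4 := fun hh => hno4 (hh ▸ h3)
      have h7 : i ≠ 2*X+3 := fun hh => hno3 (hh ▸ h3)
      have h8 : i ≠ 2*X+2 := fun hh => hmem (hh ▸ h3)
      omega
    have hlt := sum_lt' (hnc.subset (Finset.erase_subset _ _)) hb
    rw [show 2*X+1+1 = 2*X+2 by ring, zpow_zero] at hlt
    have heq := sf_erase hmem5
    rw [hsum] at heq
    rw [hL5, hL2] at hN1
    have h9 : goldenRatio ^ (-(2*X)-5) < goldenRatio ^ (-(2*X)-2) := gp_strict (by omega)
    linarith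
  have hno1 : (2*X+1) ∉ s := by
    intro h
    have := hnc _ h (by omega)
    rw [show 2*X+1+1 = 2*X+2 by ring] at this
    exact this hmem2
  -- bottom
  have hsg : sg s = N := sg_eq_of_sf_int (m := N) (by exact_mod_cast hsum)
  have hmin_le : s.min' hne ≤ -(2*X)-5 := by
    by_contra h
    push_neg at h
    have hub := sg_lt_of_ge hnc (a := s.min' hne) (fun i hi => s.min'_le i hi)
    have hmono : goldenRatio ^ (-(s.min' hne)+1) ≤ goldenRatio ^ (2*X+5) := gp_mono (by omega)
    have hsmall : goldenRatio ^ (-1:ℤ) < 1 := gp_neg_lt_one (by norm_num)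
    rw [hsg] at hub
    linarith
  have hmineven := rep_min_even hNpos hsum hne
  have hmin_le2 : s.min' hne ≤ -(2*X)-6 := by
    rcases hmineven with ⟨r, hr⟩; omega
  have hmin_ge : -(2*X)-6 ≤ s.min' hne := by
    by_contra h
    push_neg at h
    have hle : s.min' hne ≤ -(2*X)-8 := by
      rcases hmineven with ⟨r, hr⟩; omega
    have hnext : s.min' hne + 1 ∉ s := hnc _ (s.min'_mem hne) (by omega)
    have hgt := sg_gt_of_even_min hne hmineven hnext
    have hmono : goldenRatio ^ (2*X+7) ≤ goldenRatio ^ (-(s.min' hne)-1) := gp_mono (by omega)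
    have h6 : goldenRatio ^ (2*X+6) < goldenRatio ^ (2*X+7) := gp_strict (by omega)
    rw [hsg] at hgt
    linarith
  have hmin_eq : s.min' hne = -(2*X)-6 := le_antisymm hmin_le2 hmin_ge
  have hmem6' : (-(2*X)-6) ∈ s := hmin_eq ▸ s.min'_mem hne
  have hno5' : (-(2*X)-5) ∉ s := by
    have := hnc _ hmem6' (by omega)
    rwa [show -(2*X)-6+1 = -(2*X)-5 by ring] at this
  have hbot : ∀ i ∈ s, -(2*X)-6 ≤ i := fun i hi => hmin_eq ▸ s.min'_le i hi
  -- conjugate sum decomposition at the bottom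
  have hsg_er : sg s = goldenRatio ^ (2*X+6) + sg (s.erase (-(2*X)-6)) := by
    rw [sg_erase hmem6', gc_even ⟨-X-3, by ring⟩]
    rw [show -(-(2*X)-6) = 2*X+6 by ring]
  -- step 8 : -(2X)-3 ∈ s
  have hmem3' : (-(2*X)-3) ∈ s := by
    by_contra hmem
    have hlow : -goldenRatio ^ (2*X+2) < sg (s.erase (-(2*X)-6)) := by
      have hge := sg_ge_neg_odd (s.erase (-(2*X)-6))
      have hlt := odd_part_lt (s := s.erase (-(2*X)-6)) (t := 2*X+1) ?_
      · rw [show 2*X+1+1 = 2*X+2 by ring] at hlt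
        linarith
      · intro i hi hodd
        have h3 : i ∈ s := Finset.mem_of_mem_erase hi
        have h4 : i ≠ -(2*X)-6 := Finset.ne_of_mem_erase hi
        have h5 := hbot i h3
        have h6 : i ≠ -(2*X)-5 := fun hh => hno5' (hh ▸ h3)
        have h7 : i ≠ -(2*X)-3 := fun hh => hmem (hh ▸ h3)
        rcases Int.not_even_iff_odd.1 hodd with ⟨a, ha⟩
        omega
    have hchain : goldenRatio ^ (2*X+6) - goldenRatio ^ (2*X+2) ≥ (N:ℝ) := by
      rw [hL5, hL3] at hN2
      have h8 : goldenRatio ^ (-(2*X)-3) < goldenRatio ^ (-(2*X)-2) := gp_strict (by omega)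
      have := gp_pos (-(2*X)-5)
      have := gp_pos (-(2*X)-3)
      linarith
    rw [hsg_er] at hsg
    linarith
  have hno2' : (-(2*X)-2) ∉ s := by
    have := hnc _ hmem3' (by omega)
    rwa [show -(2*X)-3+1 = -(2*X)-2 by ring] at this
  have hno4' : (-(2*X)-4) ∉ s := by
    intro h
    have := hnc _ h (by omega)
    rw [show -(2*X)-4+1 = -(2*X)-3 by ring] at this
    exact this hmem3'
  -- step 10 : -(2X)-1 ∉ s
  have hno1' : (-(2*X)-1) ∉ s := by
    intro hmem
    set s1 := s.erase (-(2*X)-6) with hs1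
    have hm3 : (-(2*X)-3) ∈ s1 := Finset.mem_erase.2 ⟨by omega, hmem3'⟩
    set s2 := s1.erase (-(2*X)-3) with hs2
    have hm1 : (-(2*X)-1) ∈ s2 :=
      Finset.mem_erase.2 ⟨by omega, Finset.mem_erase.2 ⟨by omega, hmem⟩⟩
    set s3 := s2.erase (-(2*X)-1) with hs3
    have hno0' : (-(2*X)) ∉ s := by
      have := hnc _ hmem (by omega)
      rwa [show -(2*X)-1+1 = -(2*X) by ring] at this
    have hsg1 : sg s1 = -goldenRatio ^ (2*X+3) + sg s2 := by
      rw [sg_erase hm3, gc_odd ⟨-X-2, by ring⟩]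
      rw [show -(-(2*X)-3) = 2*X+3 by ring]
    have hsg2 : sg s2 = -goldenRatio ^ (2*X+1) + sg s3 := by
      rw [sg_erase hm1, gc_odd ⟨-X-1, by ring⟩]
      rw [show -(-(2*X)-1) = 2*X+1 by ring]
    have hub3 : sg s3 ≤ goldenRatio ^ (2*X-1) := by
      have hle := sg_le_even s3
      have hlt := even_part_lt (s := s3) (t := 2*X-2) ?_
      · rw [show 2*X-2+1 = 2*X-1 by ring] at hlt
        linarith
      · intro i hi heveni
        have h3 : i ∈ s := Finset.mem_of_mem_erase (Finset.mem_of_mem_erase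
          (Finset.mem_of_mem_erase hi))
        have h4 : i ≠ -(2*X)-1 := Finset.ne_of_mem_erase hi
        have h5 : i ≠ -(2*X)-3 := Finset.ne_of_mem_erase (Finset.mem_of_mem_erase hi)
        have h6 : i ≠ -(2*X)-6 :=
          Finset.ne_of_mem_erase (Finset.mem_of_mem_erase (Finset.mem_of_mem_erase hi))
        have h7 := hbot i h3
        have h8 : i ≠ -(2*X)-5 := fun hh => hno5' (hh ▸ h3)
        have h9 : i ≠ -(2*X)-2 := fun hh => hno2' (hh ▸ h3)
        have h10 : i ≠ -(2*X)-4 := fun hh => hno4' (hh ▸ h3)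
        have h11 : i ≠ -(2*X) := fun hh => hno0' (hh ▸ h3)
        rcases heveni with ⟨a, ha⟩
        omega
    -- combine: sg s < φ^{2X+6} - φ^{2X+3} - φ^{2X+1} + φ^{2X-1} ≤ φ^{2X+5} + φ^{2X+2} < N
    have hcomb : sg s ≤ goldenRatio ^ (2*X+6) - goldenRatio ^ (2*X+3)
        - goldenRatio ^ (2*X+1) + goldenRatio ^ (2*X-1) := by
      rw [hsg_er, hsg1, hsg2]
      linarith
    have e3 : goldenRatio ^ (2*X+1) = goldenRatio ^ (2*X) + goldenRatio ^ (2*X-1) := by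
      have := gp_rec (2*X-1)
      rwa [show 2*X-1+2 = 2*X+1 by ring, show 2*X-1+1 = 2*X by ring] at this
    have hfin : goldenRatio ^ (2*X+6) - goldenRatio ^ (2*X+3) - goldenRatio ^ (2*X+1)
        + goldenRatio ^ (2*X-1) < goldenRatio ^ (2*X+5) + goldenRatio ^ (2*X+2) := by
      have := gp_pos (2*X)
      linarith
    have hNlow2 : goldenRatio ^ (2*X+5) + goldenRatio ^ (2*X+2) < (N:ℝ) := by
      rw [hL5, hL2] at hN1
      have := gp_pos (-(2*X)-2)
      have h9 : goldenRatio ^ (-(2*X)-5) < (1:ℝ) := by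
        rw [show -(2*X)-5 = -(2*X+5) by ring]
        exact gp_neg_lt_one (by omega)
      linarith
    rw [hsg] at hcomb
    linarith
  exact ⟨fun i hi => ⟨hbot i hi, htop i hi⟩, hmem5, hno4, hno3, hmem2, hno1,
    hno1', hno2', hmem3', hno4', hno5', hmem6'⟩

end Stmt12
namespace Stmt12
open Finset goldenRatio Real

/-- finitely supported 0/1 indicator of a finset -/
def fs (s : Finset ℤ) : ℤ →₀ ℕ := Finsupp.indicator s (fun _ _ => 1)

lemma fs_mem {s : Finset ℤ} {i : ℤ} (h : i ∈ s) : fs s i = 1 := by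
  classical
  simp [fs, Finsupp.indicator_of_mem h]

lemma fs_not_mem {s : Finset ℤ} {i : ℤ} (h : i ∉ s) : fs s i = 0 := by
  classical
  simp [fs, Finsupp.indicator_of_notMem h]

lemma fs_le_one (s : Finset ℤ) (i : ℤ) : fs s i ≤ 1 := by
  by_cases h : i ∈ s
  · rw [fs_mem h]
  · rw [fs_not_mem h]; omega

lemma fs_support (s : Finset ℤ) : (fs s).support = s := by
  ext i
  rw [Finsupp.mem_support_iff]
  by_cases h : i ∈ s
  · simp [fs_mem h, h]
  · simp [fs_not_mem h, h]

lemma digit_one {c : ℤ →₀ ℕ} (h : ∀ i, c i ≤ 1) {i : ℤ} (hi : i ∈ c.support) : c i = 1 := by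
  have h1 := Finsupp.mem_support_iff.1 hi
  have h2 := h i
  omega

lemma rep_eq_fs {c : ℤ →₀ ℕ} (h : ∀ i, c i ≤ 1) : c = fs c.support := by
  ext i
  by_cases hi : i ∈ c.support
  · rw [fs_mem hi, digit_one h hi]
  · rw [fs_not_mem hi, Finsupp.notMem_support_iff.1 hi]

lemma sum_eq_sf {c : ℤ →₀ ℕ} (h : ∀ i, c i ≤ 1) :
    (c.sum fun i a => (a : ℝ) * goldenPhi ^ i) = sf c.support := by
  rw [Finsupp.sum, sf]
  apply Finset.sum_congr rfl
  intro i hi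
  rw [digit_one h hi, goldenPhi_eq]
  norm_num

lemma sum_fs (s : Finset ℤ) : ((fs s).sum fun i a => (a : ℝ) * goldenPhi ^ i) = sf s := by
  rw [sum_eq_sf (fs_le_one s), fs_support]

lemma isPhiRep_fs {s : Finset ℤ} {N : ℕ} (hsum : sf s = N) : IsPhiRep N (fs s) :=
  ⟨fs_le_one s, by rw [sum_fs]; exact hsum⟩

lemma isBergman_fs {s : Finset ℤ} {N : ℕ} (hnc : NC s) (hsum : sf s = N) :
    IsBergman N (fs s) := by
  refine ⟨isPhiRep_fs hsum, ?_⟩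
  intro i
  by_cases h1 : i ∈ s
  · by_cases h2 : i + 1 ∈ s
    · exact absurd h2 (hnc i h1)
    · rw [fs_not_mem h2]; ring
  · rw [fs_not_mem h1]; ring

lemma isAdmissible_fs {s : Finset ℤ} {N : ℕ} (hnc : NCp 0 s) (hsum : sf s = N) :
    IsAdmissible N (fs s) := by
  refine ⟨isPhiRep_fs hsum, ?_⟩
  intro i hi
  by_cases h1 : i ∈ s
  · by_cases h2 : i + 1 ∈ s
    · exact absurd h2 (hnc i h1 hi)
    · rw [fs_not_mem h2]; ring
  · rw [fs_not_mem h1]; ring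

lemma isBergman_nc {N : ℕ} {c : ℤ →₀ ℕ} (h : IsBergman N c) : NC c.support := by
  intro i hi hi1
  have h1 := Finsupp.mem_support_iff.1 hi
  have h2 := Finsupp.mem_support_iff.1 hi1
  have h3 := h.2 i
  rcases Nat.mul_eq_zero.1 h3 with h4 | h4
  · exact h2 h4
  · exact h1 h4

lemma isAdmissible_ncp {N : ℕ} {c : ℤ →₀ ℕ} (h : IsAdmissible N c) : NCp 0 c.support := by
  intro i hi hne hi1
  have h1 := Finsupp.mem_support_iff.1 hi
  have h2 := Finsupp.mem_support_iff.1 hi1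
  have h3 := h.2 i hne
  rcases Nat.mul_eq_zero.1 h3 with h4 | h4
  · exact h2 h4
  · exact h1 h4

lemma isPhiRep_sf {N : ℕ} {c : ℤ →₀ ℕ} (h : IsPhiRep N c) : sf c.support = N := by
  rw [← sum_eq_sf h.1]; exact h.2

/-- Uniqueness of Bergman representations. -/
lemma bergman_unique {N : ℕ} {c d : ℤ →₀ ℕ} (hc : IsBergman N c) (hd : IsBergman N d) :
    c = d := by
  have h1 : c.support = d.support :=
    sf_inj _ (isBergman_nc hc) _ (isBergman_nc hd)
      (by rw [isPhiRep_sf hc.1, isPhiRep_sf hd.1])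
  rw [rep_eq_fs hc.1.1, rep_eq_fs hd.1.1, h1]

/-- Uniqueness of admissible representations with the exceptional pair. -/
lemma adm_exc_unique {N : ℕ} {c d : ℤ →₀ ℕ}
    (hc : IsAdmissible N c) (hc1 : c 1 = 1) (hc0 : c 0 = 1)
    (hd : IsAdmissible N d) (hd1 : d 1 = 1) (hd0 : d 0 = 1) : c = d := by
  have key : ∀ e : ℤ →₀ ℕ, IsAdmissible N e → e 1 = 1 → e 0 = 1 →
      NC ((e.support.erase 0).erase 1) ∧
      sf ((e.support.erase 0).erase 1) = (N:ℝ) - 1 - goldenRatio ^ (1:ℤ) := by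
    intro e he he1 he0
    have h0 : (0:ℤ) ∈ e.support := Finsupp.mem_support_iff.2 (by omega)
    have h1 : (1:ℤ) ∈ e.support := Finsupp.mem_support_iff.2 (by omega)
    have hncp := isAdmissible_ncp he
    constructor
    · intro i hi hi1
      have g1 : i ∈ e.support :=
        Finsupp.mem_support_iff.2 (Finsupp.mem_support_iff.1
          (Finset.mem_of_mem_erase (Finset.mem_of_mem_erase hi)))
      have g2 : i ≠ 1 := Finset.ne_of_mem_erase hi
      have g3 : i ≠ 0 := Finset.ne_of_mem_erase (Finset.mem_of_mem_erase hi)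
      have g4 : i + 1 ∈ e.support :=
        Finset.mem_of_mem_erase (Finset.mem_of_mem_erase hi1)
      exact hncp i g1 g3 g4
    · have e1 : sf e.support = (N:ℝ) := isPhiRep_sf he.1
      have e2 : sf e.support = goldenRatio ^ (0:ℤ) + sf (e.support.erase 0) := sf_erase h0
      have h1' : (1:ℤ) ∈ e.support.erase 0 := Finset.mem_erase.2 ⟨by omega, h1⟩
      have e3 : sf (e.support.erase 0) = goldenRatio ^ (1:ℤ)
          + sf ((e.support.erase 0).erase 1) := sf_erase h1'
      rw [zpow_zero] at e2
      linarith
  obtain ⟨hnc1, hsum1⟩ := key c hc hc1 hc0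
  obtain ⟨hnc2, hsum2⟩ := key d hd hd1 hd0
  have heq : (c.support.erase 0).erase 1 = (d.support.erase 0).erase 1 :=
    sf_inj _ hnc1 _ hnc2 (by rw [hsum1, hsum2])
  have hsupp : c.support = d.support := by
    ext i
    by_cases hi0 : i = 0
    · subst hi0
      simp [Finsupp.mem_support_iff, hc0, hd0]
    · by_cases hi1 : i = 1
      · subst hi1
        simp [Finsupp.mem_support_iff, hc1, hd1]
      · constructor
        · intro h
          have : i ∈ (c.support.erase 0).erase 1 :=
            Finset.mem_erase.2 ⟨hi1, Finset.mem_erase.2 ⟨hi0, h⟩⟩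
          rw [heq] at this
          exact Finset.mem_of_mem_erase (Finset.mem_of_mem_erase this)
        · intro h
          have : i ∈ (d.support.erase 0).erase 1 :=
            Finset.mem_erase.2 ⟨hi1, Finset.mem_erase.2 ⟨hi0, h⟩⟩
          rw [← heq] at this
          exact Finset.mem_of_mem_erase (Finset.mem_of_mem_erase this)
  rw [rep_eq_fs hc.1.1, rep_eq_fs hd.1.1, hsupp]

end Stmt12
namespace Stmt12
open Finset goldenRatio Real

/-- the transform on supports -/
def TN (p : ℤ) (SM : Finset ℤ) : Finset ℤ :=
  insert (2*p+5) (insert (-(2*p)-3) (insert (-(2*p)-6) (SM.erase (-(2*p)-2))))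

lemma mem_TN {p : ℤ} {SM : Finset ℤ} {i : ℤ} :
    i ∈ TN p SM ↔ i = 2*p+5 ∨ i = -(2*p)-3 ∨ i = -(2*p)-6 ∨ (i ∈ SM ∧ i ≠ -(2*p)-2) := by
  simp only [TN, Finset.mem_insert, Finset.mem_erase]
  tauto

lemma TN_sum {p : ℕ} {SM : Finset ℤ} {M : ℕ}
    (hbd : ∀ i ∈ SM, -(2*(p:ℤ))-2 ≤ i ∧ i ≤ 2*(p:ℤ)+2)
    (hbotm : (-(2*(p:ℤ))-2) ∈ SM)
    (hsum : sf SM = M) :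
    sf (TN (p:ℤ) SM) = ((lucas (2*p+5) + M : ℕ) : ℝ) := by
  have hp0 : (0:ℤ) ≤ (p:ℤ) := by positivity
  set X := (p:ℤ) with hX
  have ha : -(2*X)-6 ∉ SM.erase (-(2*X)-2) := by
    intro h
    have := (hbd _ (Finset.mem_of_mem_erase h)).1
    omega
  have hb : -(2*X)-3 ∉ insert (-(2*X)-6) (SM.erase (-(2*X)-2)) := by
    intro h
    rcases Finset.mem_insert.1 h with h | h
    · omega
    · have := (hbd _ (Finset.mem_of_mem_erase h)).1
      have := Finset.ne_of_mem_erase h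
      omega
  have hc : 2*X+5 ∉ insert (-(2*X)-3) (insert (-(2*X)-6) (SM.erase (-(2*X)-2))) := by
    intro h
    rcases Finset.mem_insert.1 h with h | h
    · omega
    · rcases Finset.mem_insert.1 h with h | h
      · omega
      · have := (hbd _ (Finset.mem_of_mem_erase h)).2
        omega
  have herase : sf (SM.erase (-(2*X)-2)) = (M:ℝ) - goldenRatio ^ (-(2*X)-2) := by
    have := sf_erase hbotm
    rw [hsum] at this
    linarith
  rw [TN, sf_insert hc, sf_insert hb, sf_insert ha, herase]
  have hL5 : (lucas (2*p+5):ℝ) = goldenRatio ^ (2*X+5) - goldenRatio ^ (-(2*X)-5) := by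
    rw [lucas_odd_real ⟨p+2, by ring⟩]; push_cast; ring_nf; rfl
  have e1 : goldenRatio ^ (-(2*X)-2) = goldenRatio ^ (-(2*X)-3) + goldenRatio ^ (-(2*X)-4) := by
    have := gp_rec (-(2*X)-4)
    rwa [show -(2*X)-4+2 = -(2*X)-2 by ring, show -(2*X)-4+1 = -(2*X)-3 by ring] at this
  have e2 : goldenRatio ^ (-(2*X)-4) = goldenRatio ^ (-(2*X)-5) + goldenRatio ^ (-(2*X)-6) := by
    have := gp_rec (-(2*X)-6)
    rwa [show -(2*X)-6+2 = -(2*X)-4 by ring, show -(2*X)-6+1 = -(2*X)-5 by ring] at this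
  push_cast
  rw [hL5]
  push_cast
  linarith

lemma TN_pair {p : ℕ} {SM : Finset ℤ}
    (hbd : ∀ i ∈ SM, -(2*(p:ℤ))-2 ≤ i ∧ i ≤ 2*(p:ℤ)+2)
    (hbote : (-(2*(p:ℤ))-1) ∉ SM) :
    ∀ i, i ∈ TN (p:ℤ) SM → i + 1 ∈ TN (p:ℤ) SM → i ∈ SM ∧ i + 1 ∈ SM := by
  have hp0 : (0:ℤ) ≤ (p:ℤ) := by positivity
  set X := (p:ℤ) with hX
  intro i hi hi1
  rcases mem_TN.1 hi with rfl | rfl | rfl | ⟨hmem, hne⟩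
  · rcases mem_TN.1 hi1 with h | h | h | ⟨h, _⟩
    · omega
    · omega
    · omega
    · have := (hbd _ h).2; omega
  · rcases mem_TN.1 hi1 with h | h | h | ⟨h, hne⟩
    · omega
    · omega
    · omega
    · omega
  · rcases mem_TN.1 hi1 with h | h | h | ⟨h, _⟩
    · omega
    · omega
    · omega
    · have := (hbd _ h).1; omega
  · have hge : -(2*X) ≤ i := by
      have h1 := (hbd _ hmem).1
      have h2 : i ≠ -(2*X)-1 := fun hh => hbote (hh ▸ hmem)
      omega
    have hle : i ≤ 2*X+2 := (hbd _ hmem).2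
    rcases mem_TN.1 hi1 with h | h | h | ⟨h, _⟩
    · omega
    · omega
    · omega
    · exact ⟨hmem, h⟩

end Stmt12
namespace Stmt12
open Finset goldenRatio Real

lemma main_p (p k : ℕ) (hk1 : 1 ≤ k) (hk2 : k ≤ lucas (2*p+1)) :
    ∃ SM SN : Finset ℤ,
      canonicalRep (lucas (2*p+2) + k) = fs SM ∧
      canonicalRep (lucas (2*p+5) + (lucas (2*p+2) + k)) = fs SN ∧
      (∀ i ∈ SM, -(2*(p:ℤ))-2 ≤ i ∧ i ≤ 2*(p:ℤ)+2) ∧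
      (2*(p:ℤ)+1) ∉ SM ∧ (-(2*(p:ℤ))-2) ∈ SM ∧ (-(2*(p:ℤ))-1) ∉ SM ∧ (2*(p:ℤ)+2) ∈ SM ∧
      SN = TN (p:ℤ) SM := by
  have hp0 : (0:ℤ) ≤ (p:ℤ) := by positivity
  set M := lucas (2*p+2) + k with hM
  set N := lucas (2*p+5) + M with hN
  have hlp2 := lucas_pos (2*p+2)
  have hlp5 := lucas_pos (2*p+5)
  have hM1 : lucas (2*p+2) < M := by omega
  have hrec : lucas (2*p+3) = lucas (2*p+2) + lucas (2*p+1) := rfl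
  have hM2 : M ≤ lucas (2*p+3) := by omega
  have hMpos : 1 ≤ M := by omega
  have hN1 : lucas (2*p+5) + lucas (2*p+2) < N := by omega
  have hN2 : N ≤ lucas (2*p+5) + lucas (2*p+3) := by omega
  have structM' : ∀ s : Finset ℤ, NCp 0 s → sf s = M →
      (∀ i ∈ s, -(2*(p:ℤ))-2 ≤ i ∧ i ≤ 2*(p:ℤ)+2) ∧ (2*(p:ℤ)+2) ∈ s ∧ (2*(p:ℤ)+1) ∉ s ∧
      (-(2*(p:ℤ))-2) ∈ s ∧ (-(2*(p:ℤ))-1) ∉ s := by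
    intro s hnc hsum
    have h := structM hnc (q := p+1) (by omega)
      (show lucas (2*(p+1)) < M by rw [show 2*(p+1) = 2*p+2 by ring]; exact hM1)
      (show M ≤ lucas (2*(p+1)+1) by rw [show 2*(p+1)+1 = 2*p+3 by ring]; exact hM2) hsum
    have hc : 2*(((p+1:ℕ)):ℤ) = 2*(p:ℤ)+2 := by push_cast; ring
    rw [hc] at h
    obtain ⟨hb, h1, h2, h3, h4⟩ := h
    refine ⟨fun i hi => by have := hb i hi; omega, h1, ?_, ?_, ?_⟩
    · rwa [show 2*(p:ℤ)+2-1 = 2*(p:ℤ)+1 by ring] at h2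
    · rwa [show -(2*(p:ℤ)+2) = -(2*(p:ℤ))-2 by ring] at h3
    · rwa [show -(2*(p:ℤ)+2)+1 = -(2*(p:ℤ))-1 by ring] at h4
  by_cases hMexc : ∃ c, IsAdmissible M c ∧ c 1 = 1 ∧ c 0 = 1
  · -- exceptional case
    have hcanM : canonicalRep M = hMexc.choose := by rw [canonicalRep, dif_pos hMexc]
    obtain ⟨hadm, h1, h0⟩ := hMexc.choose_spec
    set SM := (hMexc.choose).support with hSM
    have hsfM : sf SM = M := isPhiRep_sf hadm.1
    have hncp : NCp 0 SM := isAdmissible_ncp hadm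
    obtain ⟨hbd, hm2, hno1, hmb, hnob⟩ := structM' SM hncp hsfM
    set SN := TN (p:ℤ) SM with hSN
    have hsfN : sf SN = (N:ℝ) := by
      rw [hSN, TN_sum hbd hmb hsfM]
    have hpair := TN_pair hbd hnob
    have hncpN : NCp 0 SN := by
      intro i hi hne hi1
      obtain ⟨g1, g2⟩ := hpair i hi hi1
      exact hncp i g1 hne g2
    have h1M : (1:ℤ) ∈ SM := Finsupp.mem_support_iff.2 (by omega)
    have h0M : (0:ℤ) ∈ SM := Finsupp.mem_support_iff.2 (by omega)
    have h1N : (1:ℤ) ∈ SN := by rw [hSN]; exact mem_TN.2 (Or.inr (Or.inr (Or.inr ⟨h1M, by omega⟩)))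
    have h0N : (0:ℤ) ∈ SN := by rw [hSN]; exact mem_TN.2 (Or.inr (Or.inr (Or.inr ⟨h0M, by omega⟩)))
    have hNexc : ∃ c, IsAdmissible N c ∧ c 1 = 1 ∧ c 0 = 1 :=
      ⟨fs SN, isAdmissible_fs hncpN hsfN, fs_mem h1N, fs_mem h0N⟩
    have hcanN : canonicalRep N = fs SN := by
      rw [canonicalRep, dif_pos hNexc]
      obtain ⟨ha', h1', h0'⟩ := hNexc.choose_spec
      exact adm_exc_unique ha' h1' h0' (isAdmissible_fs hncpN hsfN) (fs_mem h1N) (fs_mem h0N)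
    exact ⟨SM, SN, by rw [hcanM]; exact rep_eq_fs hadm.1.1, hcanN, hbd, hno1, hmb, hnob, hm2, rfl⟩
  · -- Bergman case
    have hexB : ∃ c, IsBergman M c := by
      obtain ⟨s, hnc, hsum⟩ := exists_rep M hMpos
      exact ⟨fs s, isBergman_fs hnc hsum⟩
    have hcanM : canonicalRep M = hexB.choose := by
      rw [canonicalRep, dif_neg hMexc, bergmanRep, dif_pos hexB]
    have hberg := hexB.choose_spec
    set SM := (hexB.choose).support with hSM
    have hsfM : sf SM = M := isPhiRep_sf hberg.1
    have hnc : NC SM := isBergman_nc hberg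
    obtain ⟨hbd, hm2, hno1, hmb, hnob⟩ := structM' SM (hnc.ncp 0) hsfM
    set SN := TN (p:ℤ) SM with hSN
    have hsfN : sf SN = (N:ℝ) := by rw [hSN, TN_sum hbd hmb hsfM]
    have hpair := TN_pair hbd hnob
    have hncN : NC SN := by
      intro i hi hi1
      obtain ⟨g1, g2⟩ := hpair i hi hi1
      exact hnc i g1 g2
    have hbergN : IsBergman N (fs SN) := isBergman_fs hncN hsfN
    have hNnoexc : ¬ ∃ c, IsAdmissible N c ∧ c 1 = 1 ∧ c 0 = 1 := by
      rintro ⟨c, hadm, hc1, hc0⟩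
      apply hMexc
      set TC := c.support with hTC
      have hncpC : NCp 0 TC := isAdmissible_ncp hadm
      have hsfC : sf TC = N := isPhiRep_sf hadm.1
      obtain ⟨cbd, cm5, cno4, cno3, cm2, cno1c, cno1', cno2', cm3', cno4', cno5', cm6'⟩ :=
        structN hncpC hN1 hN2 hsfC
      set S1 := ((TC.erase (2*(p:ℤ)+5)).erase (-(2*(p:ℤ))-3)).erase (-(2*(p:ℤ))-6) with hS1
      have hmemS1 : ∀ i, i ∈ S1 ↔
          (i ∈ TC ∧ i ≠ 2*(p:ℤ)+5 ∧ i ≠ -(2*(p:ℤ))-3 ∧ i ≠ -(2*(p:ℤ))-6) := by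
        intro i
        simp only [hS1, Finset.mem_erase]
        tauto
      set SM' := insert (-(2*(p:ℤ))-2) S1 with hSM'
      have hnot2 : (-(2*(p:ℤ))-2) ∉ S1 := by
        intro h
        exact cno2' ((hmemS1 _).1 h).1
      have e5 : (2*(p:ℤ)+5) ∈ TC := cm5
      have e3' : (-(2*(p:ℤ))-3) ∈ TC.erase (2*(p:ℤ)+5) := Finset.mem_erase.2 ⟨by omega, cm3'⟩
      have e6' : (-(2*(p:ℤ))-6) ∈ (TC.erase (2*(p:ℤ)+5)).erase (-(2*(p:ℤ))-3) :=
        Finset.mem_erase.2 ⟨by omega, Finset.mem_erase.2 ⟨by omega, cm6'⟩⟩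
      have hsum' : sf SM' = (M:ℝ) := by
        have d1 := sf_erase e5
        have d2 := sf_erase e3'
        have d3 := sf_erase e6'
        rw [hsfC] at d1
        have d4 : sf SM' = goldenRatio ^ (-(2*(p:ℤ))-2) + sf S1 := sf_insert hnot2
        have hL5 : (lucas (2*p+5):ℝ)
            = goldenRatio ^ (2*(p:ℤ)+5) - goldenRatio ^ (-(2*(p:ℤ))-5) := by
          rw [lucas_odd_real ⟨p+2, by ring⟩]; push_cast; ring_nf
        have e1 : goldenRatio ^ (-(2*(p:ℤ))-2)
            = goldenRatio ^ (-(2*(p:ℤ))-3) + goldenRatio ^ (-(2*(p:ℤ))-4) := by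
          have := gp_rec (-(2*(p:ℤ))-4)
          rwa [show -(2*(p:ℤ))-4+2 = -(2*(p:ℤ))-2 by ring,
            show -(2*(p:ℤ))-4+1 = -(2*(p:ℤ))-3 by ring] at this
        have e2 : goldenRatio ^ (-(2*(p:ℤ))-4)
            = goldenRatio ^ (-(2*(p:ℤ))-5) + goldenRatio ^ (-(2*(p:ℤ))-6) := by
          have := gp_rec (-(2*(p:ℤ))-6)
          rwa [show -(2*(p:ℤ))-6+2 = -(2*(p:ℤ))-4 by ring,
            show -(2*(p:ℤ))-6+1 = -(2*(p:ℤ))-5 by ring] at this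
        have hNM : (N:ℝ) = (lucas (2*p+5):ℝ) + (M:ℝ) := by
          rw [hN]; push_cast; ring
        rw [d4, ← hS1] at *
        rw [hNM, hL5] at d1
        linarith
      have hncp' : NCp 0 SM' := by
        intro i hi hne hi1
        rcases Finset.mem_insert.1 hi with rfl | hi'
        · rcases Finset.mem_insert.1 hi1 with h | h
          · omega
          · have := ((hmemS1 _).1 h).1
            rw [show -(2*(p:ℤ))-2+1 = -(2*(p:ℤ))-1 by ring] at this
            exact cno1' this
        · obtain ⟨g1, g2, g3, g4⟩ := (hmemS1 _).1 hi'
          rcases Finset.mem_insert.1 hi1 with h | h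
          · omega
          · exact hncpC i g1 hne ((hmemS1 _).1 h).1
      have h1C : (1:ℤ) ∈ TC := Finsupp.mem_support_iff.2 (by omega)
      have h0C : (0:ℤ) ∈ TC := Finsupp.mem_support_iff.2 (by omega)
      have h1' : (1:ℤ) ∈ SM' := Finset.mem_insert.2 (Or.inr ((hmemS1 _).2 ⟨h1C, by omega, by omega, by omega⟩))
      have h0' : (0:ℤ) ∈ SM' := Finset.mem_insert.2 (Or.inr ((hmemS1 _).2 ⟨h0C, by omega, by omega, by omega⟩))
      exact ⟨fs SM', isAdmissible_fs hncp' hsum', fs_mem h1', fs_mem h0'⟩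
    have hexN : ∃ c, IsBergman N c := ⟨fs SN, hbergN⟩
    have hcanN : canonicalRep N = fs SN := by
      rw [canonicalRep, dif_neg hNnoexc, bergmanRep, dif_pos hexN]
      exact bergman_unique hexN.choose_spec hbergN
    exact ⟨SM, SN, by rw [hcanM]; exact rep_eq_fs hberg.1.1, hcanN, hbd, hno1, hmb, hnob, hm2, rfl⟩

end Stmt12
open Finset goldenRatio Real Stmt12 in
theorem stmt12 (n k : ℕ) (hn : 2 ≤ n) (hk1 : 1 ≤ k) (hk2 : k ≤ lucas (2 * n - 3)) :
    canonicalRep (lucas (2 * n + 1) + lucas (2 * n - 2) + k) (2 * (n : ℤ) + 1) = 1 ∧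
    canonicalRep (lucas (2 * n + 1) + lucas (2 * n - 2) + k) (2 * (n : ℤ)) = 0 ∧
    canonicalRep (lucas (2 * n + 1) + lucas (2 * n - 2) + k) (2 * (n : ℤ) - 1) = 0 ∧
    canonicalRep (lucas (2 * n + 1) + lucas (2 * n - 2) + k) (2 * (n : ℤ) - 2) = 1 ∧
    canonicalRep (lucas (2 * n + 1) + lucas (2 * n - 2) + k) (2 * (n : ℤ) - 3) = 0 ∧
    (∀ i : ℤ, -(2 * (n : ℤ)) + 4 ≤ i → i ≤ 2 * (n : ℤ) - 4 →
      canonicalRep (lucas (2 * n + 1) + lucas (2 * n - 2) + k) i =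
        canonicalRep (lucas (2 * n - 2) + k) i) ∧
    canonicalRep (lucas (2 * n + 1) + lucas (2 * n - 2) + k) (-(2 * (n : ℤ)) + 3) = 0 ∧
    canonicalRep (lucas (2 * n + 1) + lucas (2 * n - 2) + k) (-(2 * (n : ℤ)) + 2) = 0 ∧
    canonicalRep (lucas (2 * n + 1) + lucas (2 * n - 2) + k) (-(2 * (n : ℤ)) + 1) = 1 ∧
    canonicalRep (lucas (2 * n + 1) + lucas (2 * n - 2) + k) (-(2 * (n : ℤ))) = 0 ∧
    canonicalRep (lucas (2 * n + 1) + lucas (2 * n - 2) + k) (-(2 * (n : ℤ)) - 1) = 0 ∧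
    canonicalRep (lucas (2 * n + 1) + lucas (2 * n - 2) + k) (-(2 * (n : ℤ)) - 2) = 1 ∧
    (∀ i : ℤ, 2 * (n : ℤ) + 1 < i →
      canonicalRep (lucas (2 * n + 1) + lucas (2 * n - 2) + k) i = 0) ∧
    (∀ i : ℤ, i < -(2 * (n : ℤ)) - 2 →
      canonicalRep (lucas (2 * n + 1) + lucas (2 * n - 2) + k) i = 0) := by
  obtain ⟨p, rfl⟩ : ∃ p, n = p + 2 := ⟨n - 2, by omega⟩
  have hk2' : k ≤ lucas (2*p+1) := by rwa [show 2*(p+2)-3 = 2*p+1 by omega] at hk2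
  obtain ⟨SM, SN, hcanM, hcanN, hbd, hno1, hmb, hnob, hm2, hSN⟩ := main_p p k hk1 hk2'
  have hargN : lucas (2*(p+2)+1) + lucas (2*(p+2)-2) + k = lucas (2*p+5) + (lucas (2*p+2) + k) := by
    rw [show 2*(p+2)+1 = 2*p+5 by ring, show 2*(p+2)-2 = 2*p+2 by omega]
    ring
  have hargM : lucas (2*(p+2)-2) + k = lucas (2*p+2) + k := by
    rw [show 2*(p+2)-2 = 2*p+2 by omega]
  rw [hargN, hargM, hcanN, hcanM]
  set X := (p:ℤ) with hX
  have hp0 : (0:ℤ) ≤ X := by positivity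
  have hcast : ((p+2:ℕ):ℤ) = X + 2 := by push_cast; ring
  rw [hcast]
  have hSNmem : ∀ i : ℤ, i ∈ SN ↔
      (i = 2*X+5 ∨ i = -(2*X)-3 ∨ i = -(2*X)-6 ∨ (i ∈ SM ∧ i ≠ -(2*X)-2)) := by
    intro i; rw [hSN]; exact mem_TN
  refine ⟨?_, ?_, ?_, ?_, ?_, ?_, ?_, ?_, ?_, ?_, ?_, ?_, ?_, ?_⟩
  · rw [show 2*(X+2)+1 = 2*X+5 by ring]
    exact fs_mem ((hSNmem _).2 (Or.inl rfl))
  · apply fs_not_mem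
    intro h
    rcases (hSNmem _).1 h with h | h | h | ⟨h, _⟩
    · omega
    · omega
    · omega
    · have := (hbd _ h).2; omega
  · apply fs_not_mem
    intro h
    rcases (hSNmem _).1 h with h | h | h | ⟨h, _⟩
    · omega
    · omega
    · omega
    · have := (hbd _ h).2; omega
  · rw [show 2*(X+2)-2 = 2*X+2 by ring]
    exact fs_mem ((hSNmem _).2 (Or.inr (Or.inr (Or.inr ⟨hm2, by omega⟩))))
  · apply fs_not_mem
    intro h
    rcases (hSNmem _).1 h with h | h | h | ⟨h, _⟩
    · omega
    · omega
    · omega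
    · rw [show 2*(X+2)-3 = 2*X+1 by ring] at h
      exact hno1 h
  · intro i hi1 hi2
    by_cases hmem : i ∈ SM
    · rw [fs_mem hmem, fs_mem ((hSNmem _).2 (Or.inr (Or.inr (Or.inr ⟨hmem, by omega⟩))))]
    · rw [fs_not_mem hmem]
      apply fs_not_mem
      intro h
      rcases (hSNmem _).1 h with h | h | h | ⟨h, _⟩
      · omega
      · omega
      · omega
      · exact hmem h
  · apply fs_not_mem
    intro h
    rcases (hSNmem _).1 h with h | h | h | ⟨h, _⟩
    · omega
    · omega
    · omega
    · rw [show -(2*(X+2))+3 = -(2*X)-1 by ring] at h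
      exact hnob h
  · apply fs_not_mem
    intro h
    rcases (hSNmem _).1 h with h | h | h | ⟨h, hne⟩
    · omega
    · omega
    · omega
    · omega
  · rw [show -(2*(X+2))+1 = -(2*X)-3 by ring]
    exact fs_mem ((hSNmem _).2 (Or.inr (Or.inl rfl)))
  · apply fs_not_mem
    intro h
    rcases (hSNmem _).1 h with h | h | h | ⟨h, _⟩
    · omega
    · omega
    · omega
    · have := (hbd _ h).1; omega
  · apply fs_not_mem
    intro h
    rcases (hSNmem _).1 h with h | h | h | ⟨h, _⟩
    · omega
    · omega
    · omega
    · have := (hbd _ h).1; omega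
  · rw [show -(2*(X+2))-2 = -(2*X)-6 by ring]
    exact fs_mem ((hSNmem _).2 (Or.inr (Or.inr (Or.inl rfl))))
  · intro i hi
    apply fs_not_mem
    intro h
    rcases (hSNmem _).1 h with h | h | h | ⟨h, _⟩
    · omega
    · omega
    · omega
    · have := (hbd _ h).2; omega
  · intro i hi
    apply fs_not_mem
    intro h
    rcases (hSNmem _).1 h with h | h | h | ⟨h, _⟩
    · omega
    · omega
    · omega
    · have := (hbd _ h).1; omega
end
end

section
/- For every n ≥ 1: (a) for an integer i, both c_i(L_{2n}) = 1 and c_i(L_{2n} + 1) = 1 hold if and only if i = 0 or i = -2n; (b) there is no integer i such that both c_i(L_{2n+1}) = 1 and c_i(L_{2n+1} + 1) = 1. -/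
noncomputable section
attribute [local instance] Classical.propDecidable
local notation "Φ" => goldenPhi
lemma phi_eq : goldenPhi = Real.goldenRatio := rfl
lemma phi_pos : 0 < Φ := Real.goldenRatio_pos
lemma phi_ne : Φ ≠ 0 := Real.goldenRatio_ne_zero
lemma one_lt_phi : 1 < Φ := Real.one_lt_goldenRatio
lemma phi_sq : Φ ^ (2:ℕ) = Φ + 1 := Real.goldenRatio_sq
lemma phi_zpow_add_two (i : ℤ) : Φ ^ (i + 2) = Φ ^ (i + 1) + Φ ^ i := by
  have h2 : Φ ^ (2:ℤ) = Φ + 1 := by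
    rw [show (2:ℤ) = ((2:ℕ):ℤ) from rfl, zpow_natCast, phi_sq]
  calc Φ ^ (i + 2) = Φ ^ i * Φ ^ (2:ℤ) := by rw [← zpow_add₀ phi_ne]
    _ = Φ ^ i * Φ + Φ ^ i := by rw [h2]; ring
    _ = Φ ^ (i + 1) + Φ ^ i := by rw [zpow_add_one₀ phi_ne]
lemma phi_zpow_pos (i : ℤ) : 0 < Φ ^ i := zpow_pos phi_pos i
lemma phi_zpow_lt {i j : ℤ} (h : i < j) : Φ ^ i < Φ ^ j :=
  zpow_lt_zpow_right₀ one_lt_phi h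
lemma phi_zpow_le {i j : ℤ} (h : i ≤ j) : Φ ^ i ≤ Φ ^ j :=
  zpow_le_zpow_right₀ one_lt_phi.le h
def phiSum (s : Finset ℤ) : ℝ := ∑ i ∈ s, Φ ^ i

def Sparse (s : Finset ℤ) : Prop := ∀ i ∈ s, i + 1 ∉ s

lemma phiSum_erase {s : Finset ℤ} {m : ℤ} (hm : m ∈ s) :
    phiSum s = Φ ^ m + phiSum (s.erase m) := by
  unfold phiSum
  rw [← Finset.add_sum_erase _ _ hm]

lemma phiSum_nonneg (s : Finset ℤ) : 0 ≤ phiSum s :=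
  Finset.sum_nonneg fun i _ => (phi_zpow_pos i).le

lemma phiSum_bound : ∀ s : Finset ℤ, Sparse s → ∀ m : ℤ, (∀ i ∈ s, i ≤ m) →
    phiSum s < Φ ^ (m + 1) := by
  intro s
  induction s using Finset.strongInduction with
  | _ s ih =>
    intro hsp m hle
    rcases s.eq_empty_or_nonempty with rfl | hne
    · simpa [phiSum] using phi_zpow_pos (m+1)
    · set t := s.max' hne with htdef
      have htm : t ∈ s := s.max'_mem hne
      have hrest : ∀ i ∈ s.erase t, i ≤ t - 2 := by
        intro i hi
        have hit : i ≠ t := Finset.ne_of_mem_erase hi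
        have his : i ∈ s := Finset.mem_of_mem_erase hi
        have h1 : i ≤ t := s.le_max' i his
        have h2 : i ≠ t - 1 := by
          rintro rfl
          exact hsp _ his (by simpa using htm)
        omega
      have ih' := ih (s.erase t) (Finset.erase_ssubset htm)
        (fun i hi hmem => hsp i (Finset.mem_of_mem_erase hi) (Finset.mem_of_mem_erase hmem)) (t - 2) hrest
      have := phiSum_erase htm
      have key : phiSum s < Φ ^ t + Φ ^ (t - 1) := by
        rw [this]
        have he : Φ ^ (t - 2 + 1) = Φ ^ (t-1) := by ring_nf
        linarith [ih', he.ge, he.le]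
      have : Φ ^ t + Φ ^ (t - 1) = Φ ^ (t + 1) := by
        have h := phi_zpow_add_two (t - 1)
        rw [show t - 1 + 2 = t + 1 by ring, show t - 1 + 1 = t by ring] at h
        linarith [h]
      have hle' : Φ ^ (t + 1) ≤ Φ ^ (m + 1) := phi_zpow_le (by have := hle t htm; omega)
      linarith

lemma phiSum_pos {s : Finset ℤ} (hne : s.Nonempty) : 0 < phiSum s :=
  Finset.sum_pos (fun i _ => phi_zpow_pos i) hne

lemma Sparse.subset {s t : Finset ℤ} (hs : Sparse s) (h : t ⊆ s) : Sparse t :=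
  fun i hi hmem => hs i (h hi) (h hmem)

lemma phiSum_mem_le {s : Finset ℤ} {m : ℤ} (hm : m ∈ s) : Φ ^ m ≤ phiSum s := by
  rw [phiSum_erase hm]
  have := phiSum_nonneg (s.erase m)
  linarith

lemma sparse_unique : ∀ k : ℕ, ∀ s t : Finset ℤ, s.card ≤ k → Sparse s → Sparse t →
    phiSum s = phiSum t → s = t := by
  intro k
  induction k with
  | zero =>
    intro s t hc hs ht heq
    have hse : s = ∅ := Finset.card_eq_zero.mp (Nat.le_zero.mp hc)
    subst hse
    rcases t.eq_empty_or_nonempty with rfl | hne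
    · rfl
    · exfalso
      have := phiSum_pos hne
      simp [phiSum] at heq this
      linarith
  | succ k ih =>
    intro s t hc hs ht heq
    rcases s.eq_empty_or_nonempty with rfl | hsne
    · rcases t.eq_empty_or_nonempty with rfl | hne
      · rfl
      · exfalso
        have := phiSum_pos hne
        simp [phiSum] at heq this
        linarith
    rcases t.eq_empty_or_nonempty with rfl | htne
    · exfalso
      have := phiSum_pos hsne
      simp [phiSum] at heq this
      linarith
    set a := s.max' hsne with ha
    set b := t.max' htne with hb
    have hab : a = b := by
      have h1 : Φ ^ a ≤ phiSum s := phiSum_mem_le (s.max'_mem hsne)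
      have h2 : Φ ^ b ≤ phiSum t := phiSum_mem_le (t.max'_mem htne)
      have h3 : phiSum s < Φ ^ (a + 1) := phiSum_bound s hs a (fun i hi => s.le_max' i hi)
      have h4 : phiSum t < Φ ^ (b + 1) := phiSum_bound t ht b (fun i hi => t.le_max' i hi)
      by_contra hne
      rcases lt_or_gt_of_ne hne with h | h
      · have : Φ ^ (a+1) ≤ Φ ^ b := phi_zpow_le (by omega)
        linarith
      · have : Φ ^ (b+1) ≤ Φ ^ a := phi_zpow_le (by omega)
        linarith
    have has : a ∈ s := s.max'_mem hsne
    have hbt : a ∈ t := hab ▸ t.max'_mem htne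
    have heq' : phiSum (s.erase a) = phiSum (t.erase a) := by
      have e1 := phiSum_erase has
      have e2 := phiSum_erase hbt
      rw [e1, e2] at heq
      linarith
    have hcard : (s.erase a).card ≤ k := by
      have := Finset.card_erase_of_mem has
      have := Finset.card_pos.mpr hsne
      omega
    have := ih (s.erase a) (t.erase a) hcard (hs.subset (Finset.erase_subset _ _))
      (ht.subset (Finset.erase_subset _ _)) heq'
    ext i
    by_cases hia : i = a
    · subst hia; simp [has, hbt]
    · constructor
      · intro hi
        have : i ∈ t.erase a := this ▸ Finset.mem_erase.mpr ⟨hia, hi⟩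
        exact Finset.mem_of_mem_erase this
      · intro hi
        have : i ∈ s.erase a := this ▸ Finset.mem_erase.mpr ⟨hia, hi⟩
        exact Finset.mem_of_mem_erase this

/-- digit function of a finset -/
def mkRep (s : Finset ℤ) : ℤ →₀ ℕ where
  support := s
  toFun := fun i => if i ∈ s then 1 else 0
  mem_support_toFun := by intro i; by_cases h : i ∈ s <;> simp [h]

lemma mkRep_apply (s : Finset ℤ) (i : ℤ) : mkRep s i = if i ∈ s then 1 else 0 := rfl

lemma mkRep_support (s : Finset ℤ) : (mkRep s).support = s := rfl

lemma mkRep_le (s : Finset ℤ) (i : ℤ) : mkRep s i ≤ 1 := by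
  rw [mkRep_apply]; split <;> omega

lemma mkRep_sum (s : Finset ℤ) :
    ((mkRep s).sum fun i a => (a : ℝ) * goldenPhi ^ i) = phiSum s := by
  rw [Finsupp.sum, mkRep_support]
  refine Finset.sum_congr rfl fun i hi => ?_
  rw [mkRep_apply, if_pos hi]
  simp

lemma digit_one_iff {c : ℤ →₀ ℕ} (hle : ∀ i, c i ≤ 1) (i : ℤ) :
    c i = 1 ↔ i ∈ c.support := by
  rw [Finsupp.mem_support_iff]
  have := hle i
  omega

lemma eq_mkRep {c : ℤ →₀ ℕ} (hle : ∀ i, c i ≤ 1) : c = mkRep c.support := by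
  ext i
  rw [mkRep_apply]
  by_cases h : i ∈ c.support
  · rw [if_pos h]; exact (digit_one_iff hle i).mpr h
  · rw [if_neg h]; simpa using (Finsupp.notMem_support_iff.mp h)

lemma rep_sum_eq {c : ℤ →₀ ℕ} (hle : ∀ i, c i ≤ 1) :
    (c.sum fun i a => (a : ℝ) * goldenPhi ^ i) = phiSum c.support := by
  conv_lhs => rw [eq_mkRep hle]
  rw [show (mkRep c.support).sum (fun i a => (a : ℝ) * goldenPhi ^ i)
      = phiSum c.support from mkRep_sum _]

lemma bergman_support_sparse {N : ℕ} {c : ℤ →₀ ℕ} (h : IsBergman N c) :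
    Sparse c.support := by
  intro i hi hmem
  have h2 := h.2 i
  rw [Nat.mul_eq_zero] at h2
  rw [Finsupp.mem_support_iff] at hi hmem
  tauto

/-- sparse except at 0 -/
def SparseExc (s : Finset ℤ) : Prop := ∀ i ∈ s, i ≠ 0 → i + 1 ∉ s

lemma admissible_support_sparseExc {N : ℕ} {c : ℤ →₀ ℕ} (h : IsAdmissible N c) :
    SparseExc c.support := by
  intro i hi hne hmem
  have h2 := h.2 i hne
  rw [Nat.mul_eq_zero] at h2
  rw [Finsupp.mem_support_iff] at hi hmem
  tauto

lemma isBergman_mkRep {N : ℕ} {s : Finset ℤ} (hs : Sparse s) (hsum : phiSum s = N) :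
    IsBergman N (mkRep s) := by
  refine ⟨⟨mkRep_le s, by rw [mkRep_sum]; exact hsum⟩, fun i => ?_⟩
  rw [mkRep_apply, mkRep_apply]
  by_cases h : i ∈ s
  · rw [if_neg (hs i h)]; ring
  · rw [if_neg h, mul_zero]

lemma isAdmissible_mkRep {N : ℕ} {s : Finset ℤ} (hs : SparseExc s) (hsum : phiSum s = N) :
    IsAdmissible N (mkRep s) := by
  refine ⟨⟨mkRep_le s, by rw [mkRep_sum]; exact hsum⟩, fun i hi => ?_⟩
  rw [mkRep_apply, mkRep_apply]
  by_cases h : i ∈ s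
  · rw [if_neg (hs i h hi)]; ring
  · rw [if_neg h, mul_zero]

lemma bergmanRep_eq {N : ℕ} {s : Finset ℤ} (hs : Sparse s) (hsum : phiSum s = N) :
    bergmanRep N = mkRep s := by
  have hex : ∃ c, IsBergman N c := ⟨mkRep s, isBergman_mkRep hs hsum⟩
  rw [bergmanRep, dif_pos hex]
  have hch := hex.choose_spec
  have hle := hch.1.1
  have h1 : hex.choose = mkRep hex.choose.support := eq_mkRep hle
  have h2 : hex.choose.support = s := by
    apply sparse_unique hex.choose.support.card _ _ le_rfl
      (bergman_support_sparse hch) hs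
    rw [← rep_sum_eq hle, hch.1.2, hsum]
  rw [h1, h2]

lemma sparseExc_erase01 {s : Finset ℤ} (hs : SparseExc s) :
    Sparse ((s.erase 1).erase 0) := by
  intro i hi hmem
  simp only [Finset.mem_erase] at hi hmem
  exact hs i hi.2.2 hi.1 hmem.2.2

lemma phiSum_erase01 {s : Finset ℤ} (h0 : (0:ℤ) ∈ s) (h1 : (1:ℤ) ∈ s) :
    phiSum s = Φ + 1 + phiSum ((s.erase 1).erase 0) := by
  rw [phiSum_erase h1, phiSum_erase (Finset.mem_erase.mpr ⟨by norm_num, h0⟩)]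
  have : Φ ^ (1:ℤ) = Φ := zpow_one Φ
  have : Φ ^ (0:ℤ) = 1 := zpow_zero Φ
  simp [zpow_one]
  ring

lemma adm11_support_unique {s t : Finset ℤ} (hs : SparseExc s) (ht : SparseExc t)
    (h0s : (0:ℤ) ∈ s) (h1s : (1:ℤ) ∈ s) (h0t : (0:ℤ) ∈ t) (h1t : (1:ℤ) ∈ t)
    (heq : phiSum s = phiSum t) : s = t := by
  have e1 := phiSum_erase01 h0s h1s
  have e2 := phiSum_erase01 h0t h1t
  have heq' : phiSum ((s.erase 1).erase 0) = phiSum ((t.erase 1).erase 0) := by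
    rw [e1, e2] at heq; linarith
  have hst : (s.erase 1).erase 0 = (t.erase 1).erase 0 :=
    sparse_unique _ _ _ le_rfl (sparseExc_erase01 hs) (sparseExc_erase01 ht) heq'
  ext i
  by_cases hi0 : i = 0
  · subst hi0; simp [h0s, h0t]
  by_cases hi1 : i = 1
  · subst hi1; simp [h1s, h1t]
  constructor
  · intro h
    have : i ∈ (t.erase 1).erase 0 := hst ▸ (by simp [hi0, hi1, h])
    simp only [Finset.mem_erase] at this; exact this.2.2
  · intro h
    have : i ∈ (s.erase 1).erase 0 := hst ▸ (by simp [hi0, hi1, h])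
    simp only [Finset.mem_erase] at this; exact this.2.2

lemma canonicalRep_eq_adm11 {N : ℕ} {s : Finset ℤ} (hs : SparseExc s)
    (h0 : (0:ℤ) ∈ s) (h1 : (1:ℤ) ∈ s) (hsum : phiSum s = N) :
    canonicalRep N = mkRep s := by
  have hm : IsAdmissible N (mkRep s) := isAdmissible_mkRep hs hsum
  have hex : ∃ c, IsAdmissible N c ∧ c 1 = 1 ∧ c 0 = 1 :=
    ⟨mkRep s, hm, by rw [mkRep_apply, if_pos h1], by rw [mkRep_apply, if_pos h0]⟩
  rw [canonicalRep, dif_pos hex]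
  have hch := hex.choose_spec
  have hle := hch.1.1.1
  have h1' : hex.choose = mkRep hex.choose.support := eq_mkRep hle
  have h2 : hex.choose.support = s := by
    apply adm11_support_unique (admissible_support_sparseExc hch.1) hs
      ((digit_one_iff hle 0).mp hch.2.2) ((digit_one_iff hle 1).mp hch.2.1) h0 h1
    rw [← rep_sum_eq hle, hch.1.1.2, hsum]
  rw [h1', h2]

lemma no_adm11 {N : ℕ} {u : Finset ℤ} (hu : Sparse u)
    (husum : phiSum u = (N:ℝ) - 1 - Φ)
    (hbad : (0:ℤ) ∈ u ∨ (1:ℤ) ∈ u ∨ (2:ℤ) ∈ u) :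
    ¬ ∃ c, IsAdmissible N c ∧ c 1 = 1 ∧ c 0 = 1 := by
  rintro ⟨c, hc, hc1, hc0⟩
  have hle := hc.1.1
  set s := c.support with hsdef
  have h0 : (0:ℤ) ∈ s := (digit_one_iff hle 0).mp hc0
  have h1 : (1:ℤ) ∈ s := (digit_one_iff hle 1).mp hc1
  have h2 : (2:ℤ) ∉ s := by
    have h2' := admissible_support_sparseExc hc 1 h1 one_ne_zero
    rwa [show (1:ℤ) + 1 = 2 by norm_num] at h2'
  have hsum : phiSum s = N := by rw [← rep_sum_eq hle, hc.1.2]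
  have heq : phiSum ((s.erase 1).erase 0) = phiSum u := by
    have := phiSum_erase01 h0 h1
    rw [this] at hsum
    rw [husum]; linarith
  have := sparse_unique _ _ _ le_rfl (sparseExc_erase01 (admissible_support_sparseExc hc))
    hu heq
  rcases hbad with hb | hb | hb
  · have : (0:ℤ) ∈ (s.erase 1).erase 0 := this ▸ hb
    simp at this
  · have : (1:ℤ) ∈ (s.erase 1).erase 0 := this ▸ hb
    simp at this
  · have : (2:ℤ) ∈ (s.erase 1).erase 0 := this ▸ hb
    simp only [Finset.mem_erase] at this
    exact h2 this.2.2

lemma canonicalRep_eq_bergman {N : ℕ} {s : Finset ℤ} (hs : Sparse s)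
    (hsum : phiSum s = N)
    (hno : ¬ ∃ c, IsAdmissible N c ∧ c 1 = 1 ∧ c 0 = 1) :
    canonicalRep N = mkRep s := by
  rw [canonicalRep, dif_neg hno, bergmanRep_eq hs hsum]

lemma lucas_binet : ∀ m : ℕ, (lucas m : ℝ) = Real.goldenRatio ^ m + Real.goldenConj ^ m
  | 0 => by norm_num [lucas]
  | 1 => by
      have := Real.goldenRatio_add_goldenConj
      simp only [lucas, pow_one, Nat.cast_one]
      linarith
  | (m + 2) => by
      rw [show lucas (m+2) = lucas (m+1) + lucas m from rfl]
      push_cast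
      rw [lucas_binet (m+1), lucas_binet m]
      have h1 : Real.goldenRatio ^ (m+2) = Real.goldenRatio ^ (m+1) + Real.goldenRatio ^ m := by
        have : Real.goldenRatio ^ (m+2) = Real.goldenRatio ^ m * Real.goldenRatio ^ 2 := by ring
        rw [this, Real.goldenRatio_sq]; ring
      have h2 : Real.goldenConj ^ (m+2) = Real.goldenConj ^ (m+1) + Real.goldenConj ^ m := by
        have : Real.goldenConj ^ (m+2) = Real.goldenConj ^ m * Real.goldenConj ^ 2 := by ring
        rw [this, Real.goldenConj_sq]; ring
      rw [h1, h2]; ring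

lemma goldenConj_eq : Real.goldenConj = -Φ⁻¹ := by
  have := Real.inv_goldenRatio
  rw [phi_eq]; linarith

lemma lucas_even (n : ℕ) : (lucas (2*n) : ℝ) = Φ ^ (2*n : ℤ) + Φ ^ (-(2*n) : ℤ) := by
  rw [lucas_binet, goldenConj_eq, ← phi_eq]
  rw [show ((-Φ⁻¹) ^ (2*n) : ℝ) = (Φ⁻¹) ^ (2*n) by rw [neg_pow]; simp [pow_mul]]
  rw [← zpow_natCast Φ (2*n), ← zpow_natCast Φ⁻¹ (2*n), inv_zpow, ← zpow_neg]
  push_cast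
  ring_nf

lemma lucas_odd (n : ℕ) : (lucas (2*n+1) : ℝ) = Φ ^ (2*n+1 : ℤ) - Φ ^ (-(2*n+1) : ℤ) := by
  rw [lucas_binet, goldenConj_eq, ← phi_eq]
  rw [show ((-Φ⁻¹) ^ (2*n+1) : ℝ) = -((Φ⁻¹) ^ (2*n+1)) by
    rw [neg_pow]; simp [pow_add, pow_mul]]
  rw [← zpow_natCast Φ (2*n+1), ← zpow_natCast Φ⁻¹ (2*n+1), inv_zpow, ← zpow_neg]
  push_cast
  ring_nf

lemma geomAsc (a : ℤ) : ∀ n : ℕ, ∑ k ∈ Finset.range n, Φ ^ (a + 2*(k:ℤ)) =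
    Φ ^ (a + 2*(n:ℤ) - 1) - Φ ^ (a - 1)
  | 0 => by simp
  | (n + 1) => by
      rw [Finset.sum_range_succ, geomAsc a n]
      have h := phi_zpow_add_two (a + 2*(n:ℤ) - 1)
      push_cast
      rw [show a + 2*(n:ℤ) - 1 + 2 = a + 2*((n:ℤ)+1) - 1 by ring,
        show a + 2*(n:ℤ) - 1 + 1 = a + 2*(n:ℤ) by ring] at h
      rw [show a + 2*((n:ℤ)+1) - 1 = a + 2*(n:ℤ) - 1 + 2 by ring] at h ⊢
      linarith

lemma geomNeg : ∀ n : ℕ, ∑ k ∈ Finset.range n, Φ ^ (-(2*(k:ℤ)+1)) =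
    1 - Φ ^ (-(2*(n:ℤ)))
  | 0 => by simp
  | (n + 1) => by
      rw [Finset.sum_range_succ, geomNeg n]
      have h := phi_zpow_add_two (-(2*((n:ℤ)+1)))
      push_cast
      rw [show -(2*((n:ℤ)+1)) + 2 = -(2*(n:ℤ)) by ring,
        show -(2*((n:ℤ)+1)) + 1 = -(2*(n:ℤ)+1) by ring] at h
      linarith

def oddPos (n : ℕ) : Finset ℤ := (Finset.range n).image (fun k : ℕ => (2*(k:ℤ)+1))
def negOdd (n : ℕ) : Finset ℤ := (Finset.range n).image (fun k : ℕ => -(2*(k:ℤ)+1))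
def SA (n : ℕ) : Finset ℤ := insert 0 (insert (-(2*n:ℤ)) (oddPos n))
def SB (n : ℕ) : Finset ℤ := {(2*n:ℤ), 0, -(2*n:ℤ)}
def UB (n : ℕ) : Finset ℤ :=
  insert 0 (insert (-(2*n:ℤ)) ((Finset.range (n-1)).image (fun k : ℕ => (2*(k:ℤ)+3))))
def SC (n : ℕ) : Finset ℤ := (Finset.range (2*n+1)).image (fun k : ℕ => (2*(k:ℤ)) - 2*n)
def UC (n : ℕ) : Finset ℤ := (SC n).erase 2
def SD (n : ℕ) : Finset ℤ := insert (2*(n:ℤ)+1) (insert (-(2*(n:ℤ)+2)) (negOdd n))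
def UD (n : ℕ) : Finset ℤ :=
  insert 1 (insert (-(2*(n:ℤ)+2))
    ((negOdd n) ∪ (Finset.range (n-1)).image (fun k : ℕ => (2*(k:ℤ)+4))))

lemma mem_oddPos {n : ℕ} {i : ℤ} : i ∈ oddPos n ↔ i % 2 = 1 ∧ 1 ≤ i ∧ i < 2*n := by
  simp only [oddPos, Finset.mem_image, Finset.mem_range]
  constructor
  · rintro ⟨k, hk, rfl⟩; omega
  · rintro ⟨h1, h2, h3⟩
    exact ⟨((i-1)/2).toNat, by omega, by omega⟩

lemma mem_negOdd {n : ℕ} {i : ℤ} : i ∈ negOdd n ↔ i % 2 = 1 ∧ -(2*n) < i ∧ i ≤ -1 := by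
  simp only [negOdd, Finset.mem_image, Finset.mem_range]
  constructor
  · rintro ⟨k, hk, rfl⟩; omega
  · rintro ⟨h1, h2, h3⟩
    exact ⟨((-i-1)/2).toNat, by omega, by omega⟩

lemma mem_SA {n : ℕ} {i : ℤ} :
    i ∈ SA n ↔ i = 0 ∨ i = -(2*n) ∨ (i % 2 = 1 ∧ 1 ≤ i ∧ i < 2*n) := by
  simp only [SA, Finset.mem_insert, mem_oddPos]

lemma mem_SB {n : ℕ} {i : ℤ} : i ∈ SB n ↔ i = 2*n ∨ i = 0 ∨ i = -(2*n) := by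
  simp [SB]

lemma mem_UB {n : ℕ} {i : ℤ} :
    i ∈ UB n ↔ i = 0 ∨ i = -(2*n) ∨ (i % 2 = 1 ∧ 3 ≤ i ∧ i < 2*n) := by
  simp only [UB, Finset.mem_insert, Finset.mem_image, Finset.mem_range]
  constructor
  · rintro (rfl | rfl | ⟨k, hk, rfl⟩)
    · left; rfl
    · right; left; rfl
    · right; right; omega
  · rintro (rfl | rfl | ⟨h1, h2, h3⟩)
    · left; rfl
    · right; left; rfl
    · right; right; exact ⟨((i-3)/2).toNat, by omega, by omega⟩

lemma mem_SC {n : ℕ} {i : ℤ} : i ∈ SC n ↔ i % 2 = 0 ∧ -(2*n) ≤ i ∧ i ≤ 2*n := by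
  simp only [SC, Finset.mem_image, Finset.mem_range]
  constructor
  · rintro ⟨k, hk, rfl⟩; omega
  · rintro ⟨h1, h2, h3⟩
    exact ⟨((i+2*n)/2).toNat, by omega, by omega⟩

lemma mem_UC {n : ℕ} {i : ℤ} :
    i ∈ UC n ↔ i ≠ 2 ∧ i % 2 = 0 ∧ -(2*n) ≤ i ∧ i ≤ 2*n := by
  simp only [UC, Finset.mem_erase, mem_SC]

lemma mem_SD {n : ℕ} {i : ℤ} :
    i ∈ SD n ↔ i = 2*n+1 ∨ i = -(2*n+2) ∨ (i % 2 = 1 ∧ -(2*n) < i ∧ i ≤ -1) := by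
  simp only [SD, Finset.mem_insert, mem_negOdd]

lemma mem_UD {n : ℕ} {i : ℤ} :
    i ∈ UD n ↔ i = 1 ∨ i = -(2*n+2) ∨ (i % 2 = 1 ∧ -(2*n) < i ∧ i ≤ -1) ∨
      (i % 2 = 0 ∧ 4 ≤ i ∧ i ≤ 2*n) := by
  simp only [UD, Finset.mem_insert, Finset.mem_union, mem_negOdd, Finset.mem_image,
    Finset.mem_range]
  constructor
  · rintro (rfl | rfl | h | ⟨k, hk, rfl⟩)
    · tauto
    · omega
    · tauto
    · right; right; right; omega
  · rintro (rfl | rfl | h | ⟨h1, h2, h3⟩)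
    · tauto
    · omega
    · tauto
    · right; right; right; exact ⟨((i-4)/2).toNat, by omega, by omega⟩

lemma phi_z0 : Φ ^ (0:ℤ) = 1 := zpow_zero Φ
lemma phi_z1 : Φ ^ (1:ℤ) = Φ := zpow_one Φ
lemma phi_z2 : Φ ^ (2:ℤ) = Φ + 1 := by
  have := phi_zpow_add_two 0
  rw [zero_add, zero_add, phi_z0, phi_z1] at this
  linarith
lemma phi_z3 : Φ ^ (3:ℤ) = 2*Φ + 1 := by
  have := phi_zpow_add_two 1
  rw [show (1:ℤ)+2 = 3 by norm_num, show (1:ℤ)+1 = 2 by norm_num, phi_z1, phi_z2] at this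
  linarith

section sets
variable {n : ℕ} (hn : 1 ≤ n)
include hn

lemma sparseExc_SA : SparseExc (SA n) := by
  intro i hi hne hmem
  rw [mem_SA] at hi hmem
  omega

lemma sparse_SB : Sparse (SB n) := by
  intro i hi hmem
  rw [mem_SB] at hi hmem
  omega

lemma sparse_UB : Sparse (UB n) := by
  intro i hi hmem
  rw [mem_UB] at hi hmem
  omega

lemma sparse_SC : Sparse (SC n) := by
  intro i hi hmem
  rw [mem_SC] at hi hmem
  omega

lemma sparse_UC : Sparse (UC n) := by
  intro i hi hmem
  rw [mem_UC] at hi hmem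
  omega

lemma sparse_SD : Sparse (SD n) := by
  intro i hi hmem
  rw [mem_SD] at hi hmem
  omega

lemma sparse_UD : Sparse (UD n) := by
  intro i hi hmem
  rw [mem_UD] at hi hmem
  omega

end sets

lemma phiSum_oddPos (n : ℕ) : phiSum (oddPos n) = Φ ^ (2*(n:ℤ)) - 1 := by
  unfold phiSum oddPos
  rw [Finset.sum_image (by intro x _ y _ h; simp only at h; omega)]
  calc ∑ k ∈ Finset.range n, Φ ^ (2*(k:ℤ)+1)
      = ∑ k ∈ Finset.range n, Φ ^ ((1:ℤ) + 2*(k:ℤ)) := by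
        refine Finset.sum_congr rfl fun k _ => ?_
        congr 1; ring
    _ = Φ ^ ((1:ℤ) + 2*(n:ℤ) - 1) - Φ ^ ((1:ℤ) - 1) := geomAsc 1 n
    _ = Φ ^ (2*(n:ℤ)) - 1 := by
        rw [show (1:ℤ) + 2*(n:ℤ) - 1 = 2*(n:ℤ) by ring, show (1:ℤ)-1 = 0 by ring, phi_z0]

lemma phiSum_negOdd (n : ℕ) : phiSum (negOdd n) = 1 - Φ ^ (-(2*(n:ℤ))) := by
  unfold phiSum negOdd
  rw [Finset.sum_image (by intro x _ y _ h; simp only at h; omega)]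
  exact geomNeg n

lemma phiSum_SA {n : ℕ} (hn : 1 ≤ n) : phiSum (SA n) = (lucas (2*n) : ℝ) := by
  have h1 : (0:ℤ) ∉ insert (-(2*n:ℤ)) (oddPos n) := by
    simp only [Finset.mem_insert, mem_oddPos]; omega
  have h2 : (-(2*n:ℤ)) ∉ oddPos n := by rw [mem_oddPos]; omega
  rw [SA, phiSum, Finset.sum_insert h1, Finset.sum_insert h2]
  rw [show (∑ i ∈ oddPos n, Φ ^ i) = phiSum (oddPos n) from rfl, phiSum_oddPos,
    lucas_even, phi_z0]
  push_cast
  ring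

lemma phiSum_SB {n : ℕ} (hn : 1 ≤ n) : phiSum (SB n) = ((lucas (2*n) + 1 : ℕ) : ℝ) := by
  have h1 : (2*n:ℤ) ∉ ({0, -(2*n:ℤ)} : Finset ℤ) := by simp; omega
  have h2 : (0:ℤ) ∉ ({-(2*n:ℤ)} : Finset ℤ) := by simp; omega
  rw [SB, phiSum, Finset.sum_insert h1, Finset.sum_insert h2, Finset.sum_singleton]
  rw [phi_z0]
  push_cast [lucas_even]
  ring

lemma phiSum_UB {n : ℕ} (hn : 1 ≤ n) :
    phiSum (UB n) = ((lucas (2*n) + 1 : ℕ) : ℝ) - 1 - Φ := by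
  have h1 : (0:ℤ) ∉ insert (-(2*n:ℤ))
      ((Finset.range (n-1)).image (fun k : ℕ => (2*(k:ℤ)+3))) := by
    simp only [Finset.mem_insert, Finset.mem_image, Finset.mem_range]
    push_neg
    exact ⟨by omega, fun k _ => by omega⟩
  have h2 : (-(2*n:ℤ)) ∉ (Finset.range (n-1)).image (fun k : ℕ => (2*(k:ℤ)+3)) := by
    simp only [Finset.mem_image, Finset.mem_range]
    push_neg
    exact fun k _ => by omega
  rw [UB, phiSum, Finset.sum_insert h1, Finset.sum_insert h2,
    Finset.sum_image (by intro x _ y _ h; simp only at h; omega)]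
  have hsum : ∑ k ∈ Finset.range (n-1), Φ ^ (2*(k:ℤ)+3)
      = Φ ^ (2*(n:ℤ)) - Φ ^ (2:ℤ) := by
    calc ∑ k ∈ Finset.range (n-1), Φ ^ (2*(k:ℤ)+3)
        = ∑ k ∈ Finset.range (n-1), Φ ^ ((3:ℤ) + 2*(k:ℤ)) := by
          refine Finset.sum_congr rfl fun k _ => ?_
          congr 1; ring
      _ = Φ ^ ((3:ℤ) + 2*((n-1:ℕ):ℤ) - 1) - Φ ^ ((3:ℤ) - 1) := geomAsc 3 (n-1)
      _ = Φ ^ (2*(n:ℤ)) - Φ ^ (2:ℤ) := by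
          rw [show ((n-1:ℕ):ℤ) = (n:ℤ) - 1 by omega]
          congr 2
          ring
  rw [hsum, phi_z0, phi_z2]
  push_cast [lucas_even]
  ring

lemma phiSum_SC {n : ℕ} : phiSum (SC n) = (lucas (2*n+1) : ℝ) := by
  rw [SC, phiSum, Finset.sum_image (by intro x _ y _ h; simp only at h; omega)]
  calc ∑ k ∈ Finset.range (2*n+1), Φ ^ (2*(k:ℤ) - 2*(n:ℤ))
      = ∑ k ∈ Finset.range (2*n+1), Φ ^ ((-(2*(n:ℤ))) + 2*(k:ℤ)) := by
        refine Finset.sum_congr rfl fun k _ => ?_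
        congr 1; ring
    _ = Φ ^ ((-(2*(n:ℤ))) + 2*((2*n+1:ℕ):ℤ) - 1) - Φ ^ ((-(2*(n:ℤ))) - 1) :=
        geomAsc _ _
    _ = (lucas (2*n+1) : ℝ) := by
        rw [lucas_odd]
        congr 2 <;> push_cast <;> ring

lemma two_mem_SC {n : ℕ} (hn : 1 ≤ n) : (2:ℤ) ∈ SC n := by
  rw [mem_SC]; omega

lemma phiSum_UC {n : ℕ} (hn : 1 ≤ n) :
    phiSum (UC n) = ((lucas (2*n+1) : ℕ) : ℝ) - 1 - Φ := by
  have := phiSum_erase (s := SC n) (two_mem_SC hn)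
  rw [show (SC n).erase 2 = UC n from rfl] at this
  rw [phiSum_SC] at this
  rw [phi_z2] at this
  linarith

lemma phiSum_SD {n : ℕ} (hn : 1 ≤ n) :
    phiSum (SD n) = ((lucas (2*n+1) + 1 : ℕ) : ℝ) := by
  have h1 : (2*(n:ℤ)+1) ∉ insert (-(2*(n:ℤ)+2)) (negOdd n) := by
    simp only [Finset.mem_insert, mem_negOdd]; omega
  have h2 : (-(2*(n:ℤ)+2)) ∉ negOdd n := by rw [mem_negOdd]; omega
  rw [SD, phiSum, Finset.sum_insert h1, Finset.sum_insert h2]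
  rw [show (∑ i ∈ negOdd n, Φ ^ i) = phiSum (negOdd n) from rfl, phiSum_negOdd]
  have key : Φ ^ (-(2*(n:ℤ))) = Φ ^ (-(2*(n:ℤ)+1)) + Φ ^ (-(2*(n:ℤ)+2)) := by
    have := phi_zpow_add_two (-(2*(n:ℤ)+2))
    rw [show -(2*(n:ℤ)+2) + 2 = -(2*(n:ℤ)) by ring,
      show -(2*(n:ℤ)+2) + 1 = -(2*(n:ℤ)+1) by ring] at this
    linarith
  push_cast [lucas_odd]
  push_cast at key
  linarith

lemma phiSum_UD {n : ℕ} (hn : 1 ≤ n) :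
    phiSum (UD n) = ((lucas (2*n+1) + 1 : ℕ) : ℝ) - 1 - Φ := by
  have h1 : (1:ℤ) ∉ insert (-(2*(n:ℤ)+2))
      ((negOdd n) ∪ (Finset.range (n-1)).image (fun k : ℕ => (2*(k:ℤ)+4))) := by
    simp only [Finset.mem_insert, Finset.mem_union, mem_negOdd, Finset.mem_image,
      Finset.mem_range]
    push_neg
    exact ⟨by omega, by omega, fun k _ => by omega⟩
  have h2 : (-(2*(n:ℤ)+2)) ∉ (negOdd n) ∪
      (Finset.range (n-1)).image (fun k : ℕ => (2*(k:ℤ)+4)) := by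
    simp only [Finset.mem_union, mem_negOdd, Finset.mem_image, Finset.mem_range]
    push_neg
    exact ⟨by omega, fun k _ => by omega⟩
  have hdisj : Disjoint (negOdd n)
      ((Finset.range (n-1)).image (fun k : ℕ => (2*(k:ℤ)+4))) := by
    rw [Finset.disjoint_left]
    intro i hi hmem
    rw [mem_negOdd] at hi
    simp only [Finset.mem_image, Finset.mem_range] at hmem
    obtain ⟨k, _, rfl⟩ := hmem
    omega
  rw [UD, phiSum, Finset.sum_insert h1, Finset.sum_insert h2, Finset.sum_union hdisj,
    Finset.sum_image (by intro x _ y _ h; simp only at h; omega)]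
  have hsum : ∑ k ∈ Finset.range (n-1), Φ ^ (2*(k:ℤ)+4)
      = Φ ^ (2*(n:ℤ)+1) - Φ ^ (3:ℤ) := by
    calc ∑ k ∈ Finset.range (n-1), Φ ^ (2*(k:ℤ)+4)
        = ∑ k ∈ Finset.range (n-1), Φ ^ ((4:ℤ) + 2*(k:ℤ)) := by
          refine Finset.sum_congr rfl fun k _ => ?_
          congr 1; ring
      _ = Φ ^ ((4:ℤ) + 2*((n-1:ℕ):ℤ) - 1) - Φ ^ ((4:ℤ) - 1) := geomAsc 4 (n-1)
      _ = Φ ^ (2*(n:ℤ)+1) - Φ ^ (3:ℤ) := by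
          rw [show ((n-1:ℕ):ℤ) = (n:ℤ) - 1 by omega]
          congr 2
          ring
  rw [show (∑ i ∈ negOdd n, Φ ^ i) = phiSum (negOdd n) from rfl, phiSum_negOdd, hsum]
  have key : Φ ^ (-(2*(n:ℤ))) = Φ ^ (-(2*(n:ℤ)+1)) + Φ ^ (-(2*(n:ℤ)+2)) := by
    have := phi_zpow_add_two (-(2*(n:ℤ)+2))
    rw [show -(2*(n:ℤ)+2) + 2 = -(2*(n:ℤ)) by ring,
      show -(2*(n:ℤ)+2) + 1 = -(2*(n:ℤ)+1) by ring] at this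
    linarith
  rw [phi_z1, phi_z3]
  push_cast [lucas_odd]
  push_cast at key
  linarith

lemma canA {n : ℕ} (hn : 1 ≤ n) : canonicalRep (lucas (2*n)) = mkRep (SA n) := by
  refine canonicalRep_eq_adm11 (sparseExc_SA hn) ?_ ?_ (phiSum_SA hn)
  · rw [mem_SA]; omega
  · rw [mem_SA]; omega

lemma canB {n : ℕ} (hn : 1 ≤ n) : canonicalRep (lucas (2*n) + 1) = mkRep (SB n) := by
  refine canonicalRep_eq_bergman (sparse_SB hn) (phiSum_SB hn) ?_
  refine no_adm11 (sparse_UB hn) ?_ (Or.inl (by rw [mem_UB]; omega))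
  exact phiSum_UB hn

lemma canC {n : ℕ} (hn : 1 ≤ n) : canonicalRep (lucas (2*n+1)) = mkRep (SC n) := by
  refine canonicalRep_eq_bergman (sparse_SC hn) phiSum_SC ?_
  refine no_adm11 (sparse_UC hn) ?_ (Or.inl (by rw [mem_UC]; omega))
  exact phiSum_UC hn

lemma canD {n : ℕ} (hn : 1 ≤ n) :
    canonicalRep (lucas (2*n+1) + 1) = mkRep (SD n) := by
  refine canonicalRep_eq_bergman (sparse_SD hn) (phiSum_SD hn) ?_
  refine no_adm11 (sparse_UD hn) ?_ (Or.inr (Or.inl (by rw [mem_UD]; omega)))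
  exact phiSum_UD hn

lemma mkRep_one_iff {s : Finset ℤ} {i : ℤ} : mkRep s i = 1 ↔ i ∈ s := by
  rw [mkRep_apply]
  split <;> simp_all

theorem stmt13 (n : ℕ) (hn : 1 ≤ n) :
    (∀ i : ℤ,
      (canonicalRep (lucas (2 * n)) i = 1 ∧ canonicalRep (lucas (2 * n) + 1) i = 1) ↔
        (i = 0 ∨ i = -(2 * n : ℤ))) ∧
    ¬ ∃ i : ℤ,
      canonicalRep (lucas (2 * n + 1)) i = 1 ∧ canonicalRep (lucas (2 * n + 1) + 1) i = 1 := by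
  constructor
  · intro i
    rw [canA hn, canB hn, mkRep_one_iff, mkRep_one_iff, mem_SA, mem_SB]
    omega
  · rintro ⟨i, h1, h2⟩
    rw [canC hn, mkRep_one_iff, mem_SC] at h1
    rw [canD hn, mkRep_one_iff, mem_SD] at h2
    omega
end
end

section
/- For every n ≥ 2 and every integer N with L_{2n} + 1 ≤ N ≤ L_{2n+1}, the canonical digit of N at position -2n + 3 is zero: c_{-2n+3}(N) = 0. -/
noncomputable section

attribute [local instance] Classical.propDecidable

namespace Aux14

noncomputable def gc : ℝ := (1 - Real.sqrt 5) / 2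

lemma sqrt5_sq : Real.sqrt 5 ^ 2 = 5 := Real.sq_sqrt (by norm_num)

lemma sqrt5_gt : (2:ℝ) < Real.sqrt 5 := by
  have : (2:ℝ) = Real.sqrt 4 := by
    rw [show (4:ℝ) = 2^2 by norm_num, Real.sqrt_sq]; norm_num
  rw [this]; exact Real.sqrt_lt_sqrt (by norm_num) (by norm_num)

lemma sqrt5_lt : Real.sqrt 5 < 3 := by
  have h3 : (3:ℝ) = Real.sqrt 9 := by
    rw [show (9:ℝ) = 3^2 by norm_num, Real.sqrt_sq]; norm_num
  rw [h3]; exact Real.sqrt_lt_sqrt (by norm_num) (by norm_num)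

lemma g_gt_one : (1:ℝ) < goldenPhi := by
  unfold goldenPhi; nlinarith [sqrt5_gt]

lemma g_lt_two : goldenPhi < 2 := by
  unfold goldenPhi; nlinarith [sqrt5_lt]

lemma g_pos : (0:ℝ) < goldenPhi := lt_trans one_pos g_gt_one
lemma g_ne : goldenPhi ≠ 0 := ne_of_gt g_pos
lemma g_ne_one : goldenPhi ≠ 1 := by
  intro h; exact absurd h.symm (ne_of_lt g_gt_one)

lemma g_sq : goldenPhi * goldenPhi = goldenPhi + 1 := by
  unfold goldenPhi; nlinarith [sqrt5_sq]

lemma gc_sq : gc * gc = gc + 1 := by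
  unfold gc; nlinarith [sqrt5_sq]

lemma gc_eq : gc = -goldenPhi⁻¹ := by
  have h : gc * goldenPhi = -1 := by unfold gc goldenPhi; nlinarith [sqrt5_sq]
  field_simp [g_ne]; linarith [h]

lemma gc_ne : gc ≠ 0 := by
  rw [gc_eq]; simp [g_ne]

lemma g_rec (i : ℤ) : goldenPhi ^ (i+2) = goldenPhi ^ (i+1) + goldenPhi ^ i := by
  have h : goldenPhi ^ (i+2) = goldenPhi ^ i * (goldenPhi * goldenPhi) := by
    rw [show i + 2 = i + 1 + 1 by ring, zpow_add_one₀ g_ne, zpow_add_one₀ g_ne]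
    ring
  rw [h, g_sq, zpow_add_one₀ g_ne]; ring

lemma gc_rec (i : ℤ) : gc ^ (i+2) = gc ^ (i+1) + gc ^ i := by
  have h : gc ^ (i+2) = gc ^ i * (gc * gc) := by
    rw [show i + 2 = i + 1 + 1 by ring, zpow_add_one₀ gc_ne, zpow_add_one₀ gc_ne]
    ring
  rw [h, gc_sq, zpow_add_one₀ gc_ne]; ring

/-- conjugate pair representation -/
lemma conjPow : ∀ i : ℤ, ∃ a b : ℤ,
    goldenPhi ^ i = ((a:ℝ) + b * Real.sqrt 5)/2 ∧ gc ^ i = ((a:ℝ) - b * Real.sqrt 5)/2 := by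
  set Q : ℤ → Prop := fun i => ∃ a b : ℤ,
    goldenPhi ^ i = ((a:ℝ) + b * Real.sqrt 5)/2 ∧ gc ^ i = ((a:ℝ) - b * Real.sqrt 5)/2 with hQ
  have hQ0 : Q 0 := ⟨2, 0, by norm_num⟩
  have hQ1 : Q 1 := ⟨1, 1, by unfold goldenPhi gc; norm_num⟩
  have fwd : ∀ i : ℤ, Q i → Q (i+1) → Q (i+2) := by
    rintro i ⟨a, b, h1, h2⟩ ⟨a', b', h3, h4⟩
    exact ⟨a + a', b + b', by rw [g_rec, h1, h3]; push_cast; ring,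
      by rw [gc_rec, h2, h4]; push_cast; ring⟩
  have bwd : ∀ i : ℤ, Q i → Q (i+1) → Q (i-1) := by
    rintro i ⟨a, b, h1, h2⟩ ⟨a', b', h3, h4⟩
    refine ⟨a' - a, b' - b, ?_, ?_⟩
    · have := g_rec (i-1); rw [show i - 1 + 2 = i + 1 by ring, show i - 1 + 1 = i by ring] at this
      rw [h1, h3] at this; push_cast; linarith
    · have := gc_rec (i-1); rw [show i - 1 + 2 = i + 1 by ring, show i - 1 + 1 = i by ring] at this
      rw [h2, h4] at this; push_cast; linarith
  have key : ∀ i : ℤ, Q i ∧ Q (i+1) := by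
    intro i
    induction i using Int.induction_on with
    | zero => exact ⟨hQ0, hQ1⟩
    | succ k ih => exact ⟨ih.2, by have := fwd k ih.1 ih.2; rwa [show (k:ℤ)+2 = k+1+1 by ring] at this⟩
    | pred k ih =>
        constructor
        · exact bwd (-k) ih.1 ih.2
        · have h : (-(k:ℤ) - 1 + 1) = -k := by ring
          rw [h]; exact ih.1
  exact fun i => (key i).1

lemma gmono {a b : ℤ} (h : a ≤ b) : goldenPhi ^ a ≤ goldenPhi ^ b :=
  zpow_le_zpow_right₀ (le_of_lt g_gt_one) h

lemma gzpos (a : ℤ) : 0 < goldenPhi ^ a := zpow_pos g_pos a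

lemma ginv_lt : goldenPhi⁻¹ * goldenPhi⁻¹ < 1 := by
  have h1 : goldenPhi⁻¹ < 1 := by
    rw [inv_lt_one_iff₀]; right; exact g_gt_one
  have h0 : 0 < goldenPhi⁻¹ := inv_pos.mpr g_pos
  nlinarith

lemma ginv_geom : (1 - goldenPhi⁻¹ * goldenPhi⁻¹)⁻¹ = goldenPhi := by
  have h2 : 1 - goldenPhi⁻¹ * goldenPhi⁻¹ = goldenPhi⁻¹ := by
    have h := g_sq
    have hp := g_pos
    field_simp
    rw [sq]; linarith
  rw [h2, inv_inv]

lemma hg2r : goldenPhi ^ (-2:ℤ) = goldenPhi⁻¹ * goldenPhi⁻¹ := by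
  have h22 : goldenPhi ^ (2:ℤ) = goldenPhi * goldenPhi := by
    rw [show (2:ℤ) = 1 + 1 by norm_num, zpow_add_one₀ g_ne, zpow_one]
  rw [zpow_neg, h22, mul_inv]

/-- master sum bound, no lower cutoff -/
lemma sumA (t : Finset ℤ) (M : ℤ) (h : ∀ i ∈ t, -i ≤ M ∧ Even (M + i)) :
    ∑ i ∈ t, goldenPhi ^ (-i) ≤ goldenPhi ^ (M + 1) := by
  set r : ℝ := goldenPhi⁻¹ * goldenPhi⁻¹ with hr
  have hr0 : 0 ≤ r := le_of_lt (mul_pos (inv_pos.mpr g_pos) (inv_pos.mpr g_pos))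
  have hr1 : r < 1 := ginv_lt
  set k : ℤ → ℕ := fun i => ((M + i) / 2).toNat with hk
  have hterm : ∀ i ∈ t, goldenPhi ^ (-i) = goldenPhi ^ M * r ^ (k i) := by
    intro i hi
    obtain ⟨hle, heven⟩ := h i hi
    obtain ⟨m, hm⟩ := heven
    have hm2 : M + i = 2 * m := by linarith
    have hm0 : 0 ≤ m := by linarith
    have hkv : (k i : ℤ) = m := by
      simp only [hk, hm2]
      rw [Int.mul_ediv_cancel_left _ (by norm_num)]
      exact Int.toNat_of_nonneg hm0
    calc goldenPhi ^ (-i) = goldenPhi ^ (M + (-2) * (k i : ℤ)) := by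
          rw [hkv]; congr 1; linarith
      _ = goldenPhi ^ M * (goldenPhi ^ (-2:ℤ)) ^ ((k i : ℤ)) := by
          rw [zpow_add₀ g_ne, zpow_mul]
      _ = goldenPhi ^ M * r ^ (k i) := by rw [hg2r, ← hr, zpow_natCast]
  rw [Finset.sum_congr rfl hterm, ← Finset.mul_sum]
  have hinj : ∀ x ∈ t, ∀ y ∈ t, k x = k y → x = y := by
    intro x hx y hy hxy
    obtain ⟨hlex, ⟨mx, hmx⟩⟩ := h x hx
    obtain ⟨hley, ⟨my, hmy⟩⟩ := h y hy
    have h1 : (k x : ℤ) = mx := by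
      simp only [hk, show M + x = 2*mx by linarith]
      rw [Int.mul_ediv_cancel_left _ (by norm_num)]
      exact Int.toNat_of_nonneg (by linarith)
    have h2 : (k y : ℤ) = my := by
      simp only [hk, show M + y = 2*my by linarith]
      rw [Int.mul_ediv_cancel_left _ (by norm_num)]
      exact Int.toNat_of_nonneg (by linarith)
    have : mx = my := by rw [← h1, ← h2]; exact_mod_cast hxy
    omega
  have hsum : ∑ i ∈ t, r ^ (k i) ≤ goldenPhi := by
    rw [← Finset.sum_image hinj]
    calc ∑ m ∈ t.image k, r ^ m ≤ ∑' m : ℕ, r ^ m :=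
          (summable_geometric_of_lt_one hr0 hr1).sum_le_tsum _ (fun i _ => pow_nonneg hr0 i)
      _ = (1 - r)⁻¹ := tsum_geometric_of_lt_one hr0 hr1
      _ = goldenPhi := ginv_geom
  calc goldenPhi ^ M * ∑ i ∈ t, r ^ (k i) ≤ goldenPhi ^ M * goldenPhi :=
        mul_le_mul_of_nonneg_left hsum (le_of_lt (gzpos M))
    _ = goldenPhi ^ (M + 1) := by rw [zpow_add_one₀ g_ne]

/-- master sum bound with lower cutoff -/
lemma sumB (t : Finset ℤ) (L M : ℤ) (hLM : L ≤ M) (hpar : Even (M - L))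
    (h : ∀ i ∈ t, (L ≤ -i ∧ -i ≤ M) ∧ Even (M + i)) :
    ∑ i ∈ t, goldenPhi ^ (-i) ≤ goldenPhi ^ (M + 1) - goldenPhi ^ (L - 1) := by
  set r : ℝ := goldenPhi⁻¹ * goldenPhi⁻¹ with hr
  have hr0 : 0 ≤ r := le_of_lt (mul_pos (inv_pos.mpr g_pos) (inv_pos.mpr g_pos))
  have hr1 : r < 1 := ginv_lt
  have hrne : r ≠ 1 := ne_of_lt hr1
  set k : ℤ → ℕ := fun i => ((M + i) / 2).toNat with hk
  obtain ⟨K0, hK0⟩ := hpar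
  have hK00 : 0 ≤ K0 := by linarith
  set K : ℕ := K0.toNat with hKdef
  have hKv : (K : ℤ) = K0 := Int.toNat_of_nonneg hK00
  have hkval : ∀ i ∈ t, (k i : ℤ) = (M + i)/2 ∧ 2 * ((M+i)/2) = M + i := by
    intro i hi
    obtain ⟨⟨hL, hM⟩, ⟨m, hm⟩⟩ := h i hi
    have hm2 : M + i = 2 * m := by linarith
    constructor
    · simp only [hk]
      exact Int.toNat_of_nonneg (by rw [hm2, Int.mul_ediv_cancel_left _ (by norm_num)]; linarith)
    · rw [hm2, Int.mul_ediv_cancel_left _ (by norm_num)]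
  have hterm : ∀ i ∈ t, goldenPhi ^ (-i) = goldenPhi ^ M * r ^ (k i) := by
    intro i hi
    obtain ⟨hkv, hdiv⟩ := hkval i hi
    calc goldenPhi ^ (-i) = goldenPhi ^ (M + (-2) * (k i : ℤ)) := by
          rw [hkv]; congr 1; linarith
      _ = goldenPhi ^ M * (goldenPhi ^ (-2:ℤ)) ^ ((k i : ℤ)) := by
          rw [zpow_add₀ g_ne, zpow_mul]
      _ = goldenPhi ^ M * r ^ (k i) := by rw [hg2r, ← hr, zpow_natCast]
  rw [Finset.sum_congr rfl hterm, ← Finset.mul_sum]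
  have hinj : ∀ x ∈ t, ∀ y ∈ t, k x = k y → x = y := by
    intro x hx y hy hxy
    obtain ⟨h1, h1'⟩ := hkval x hx
    obtain ⟨h2, h2'⟩ := hkval y hy
    have : (M + x)/2 = (M + y)/2 := by rw [← h1, ← h2]; exact_mod_cast hxy
    omega
  have himg : t.image k ⊆ Finset.range (K + 1) := by
    intro m hm
    obtain ⟨i, hi, hki⟩ := Finset.mem_image.mp hm
    obtain ⟨h1, h1'⟩ := hkval i hi
    obtain ⟨⟨hL, hM⟩, _⟩ := h i hi
    rw [Finset.mem_range]
    have : (m : ℤ) ≤ K0 := by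
      rw [← hki, h1]; omega
    omega
  have hgeo : ∑ m ∈ Finset.range (K+1), r ^ m = (r^(K+1) - 1)/(r - 1) := geom_sum_eq hrne _
  have hsum : ∑ i ∈ t, r ^ (k i) ≤ (1 - r^(K+1)) * goldenPhi := by
    rw [← Finset.sum_image hinj]
    calc ∑ m ∈ t.image k, r ^ m ≤ ∑ m ∈ Finset.range (K+1), r ^ m :=
          Finset.sum_le_sum_of_subset_of_nonneg himg (fun m _ _ => pow_nonneg hr0 m)
      _ = (r^(K+1) - 1)/(r - 1) := hgeo
      _ = (1 - r^(K+1)) * (1 - r)⁻¹ := by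
          rw [div_eq_mul_inv, show r^(K+1) - 1 = -(1 - r^(K+1)) by ring,
            show r - 1 = -(1 - r) by ring]
          rw [inv_neg]
          ring
      _ = (1 - r^(K+1)) * goldenPhi := by rw [ginv_geom]
  have hrK : goldenPhi ^ M * ((1 - r^(K+1)) * goldenPhi) = goldenPhi ^ (M+1) - goldenPhi ^ (L-1) := by
    have hpow : goldenPhi ^ (M + 1) * r^(K+1) = goldenPhi ^ (L - 1) := by
      have : (r : ℝ)^(K+1) = (goldenPhi ^ (-2:ℤ)) ^ ((K+1 : ℕ) : ℤ) := by
        rw [hg2r, ← hr, zpow_natCast]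
      rw [this, ← zpow_mul, ← zpow_add₀ g_ne]
      congr 1
      push_cast [hKv]
      linarith
    have hMg : goldenPhi ^ M * goldenPhi = goldenPhi ^ (M+1) := by rw [zpow_add_one₀ g_ne]
    calc goldenPhi ^ M * ((1 - r^(K+1)) * goldenPhi)
        = goldenPhi ^ M * goldenPhi - (goldenPhi ^ M * goldenPhi) * r^(K+1) := by ring
      _ = goldenPhi ^ (M+1) - goldenPhi ^ (M+1) * r^(K+1) := by rw [hMg]
      _ = goldenPhi ^ (M+1) - goldenPhi ^ (L-1) := by rw [hpow]
  calc goldenPhi ^ M * ∑ i ∈ t, r ^ (k i) ≤ goldenPhi ^ M * ((1 - r^(K+1)) * goldenPhi) :=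
        mul_le_mul_of_nonneg_left hsum (le_of_lt (gzpos M))
    _ = goldenPhi ^ (M+1) - goldenPhi ^ (L-1) := hrK

lemma gc_zpow_even {i : ℤ} (h : Even i) : gc ^ i = goldenPhi ^ (-i) := by
  rw [gc_eq, show -goldenPhi⁻¹ = (-1) * goldenPhi⁻¹ by ring, mul_zpow,
    Even.neg_one_zpow h, one_mul, inv_zpow, ← zpow_neg]

lemma gc_zpow_odd {i : ℤ} (h : Odd i) : gc ^ i = -(goldenPhi ^ (-i)) := by
  rw [gc_eq, show -goldenPhi⁻¹ = (-1) * goldenPhi⁻¹ by ring, mul_zpow,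
    Odd.neg_one_zpow h, inv_zpow, ← zpow_neg]
  ring

lemma lucas_real : ∀ k : ℕ, (lucas k : ℝ) = goldenPhi ^ (k:ℤ) + gc ^ (k:ℤ)
  | 0 => by norm_num [lucas]
  | 1 => by
      have : goldenPhi + gc = 1 := by unfold goldenPhi gc; ring
      simp [lucas, this]
  | (k+2) => by
      have i1 := lucas_real k
      have i2 := lucas_real (k+1)
      have hg := g_rec (k:ℤ)
      have hc := gc_rec (k:ℤ)
      show ((lucas (k+1) + lucas k : ℕ) : ℝ) = _
      push_cast at i1 i2 ⊢
      rw [show (((k:ℕ):ℤ)+2) = ((k:ℤ)+2) from rfl, hg, hc, i1, i2]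
      ring

/-- the Galois-conjugate sum identity -/
lemma conj_sum (N : ℕ) (c : ℤ →₀ ℕ)
    (hrep : (c.sum fun i a => (a : ℝ) * goldenPhi ^ i) = N) :
    ∑ i ∈ c.support, (c i : ℝ) * gc ^ i = N := by
  choose aF bF hA hB using conjPow
  set S := c.support with hS
  set A : ℤ := ∑ i ∈ S, (c i : ℤ) * aF i with hAdef
  set B : ℤ := ∑ i ∈ S, (c i : ℤ) * bF i with hBdef
  have e1 : ∑ i ∈ S, (c i : ℝ) * goldenPhi ^ i = ((A:ℝ) + (B:ℝ) * Real.sqrt 5)/2 := by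
    have hterm : ∀ i ∈ S, (c i : ℝ) * goldenPhi ^ i
        = ((c i:ℝ) * (aF i:ℝ) + (c i:ℝ) * (bF i:ℝ) * Real.sqrt 5)/2 := by
      intro i _; rw [hA i]; ring
    rw [Finset.sum_congr rfl hterm, ← Finset.sum_div, Finset.sum_add_distrib, ← Finset.sum_mul,
      hAdef, hBdef]
    push_cast
    ring
  have e2 : ∑ i ∈ S, (c i : ℝ) * gc ^ i = ((A:ℝ) - (B:ℝ) * Real.sqrt 5)/2 := by
    have hterm : ∀ i ∈ S, (c i : ℝ) * gc ^ i
        = ((c i:ℝ) * (aF i:ℝ) - (c i:ℝ) * (bF i:ℝ) * Real.sqrt 5)/2 := by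
      intro i _; rw [hB i]; ring
    rw [Finset.sum_congr rfl hterm, ← Finset.sum_div, Finset.sum_sub_distrib, ← Finset.sum_mul,
      hAdef, hBdef]
    push_cast
    ring
  have hNr : ((A:ℝ) + (B:ℝ) * Real.sqrt 5)/2 = N := by
    rw [← e1, ← hrep]; rfl
  have hB0 : B = 0 := by
    by_contra hB0
    have h5 : (B:ℝ) * Real.sqrt 5 = ((2 * (N:ℤ) - A : ℤ) : ℝ) := by push_cast; linarith
    have hirr : Irrational ((B:ℝ) * Real.sqrt 5) := by
      have hs5 : Irrational (Real.sqrt 5) := (Nat.prime_five).irrational_sqrt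
      exact hs5.intCast_mul hB0
    exact hirr.ne_int (2 * (N:ℤ) - A) h5
  rw [e2, hB0]
  rw [hB0] at hNr
  push_cast at hNr ⊢
  linarith

end Aux14

open Aux14

theorem stmt14 (n N : ℕ) (hn : 2 ≤ n)
    (h1 : lucas (2 * n) + 1 ≤ N) (h2 : N ≤ lucas (2 * n + 1)) :
    canonicalRep N (-(2 * (n : ℤ)) + 3) = 0 := by
  have key : ∀ c : ℤ →₀ ℕ, IsAdmissible N c → c (-(2 * (n : ℤ)) + 3) = 0 := by
    intro c hc
    obtain ⟨⟨hle, hrep⟩, hadj⟩ := hc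
    by_contra h0
    set e : ℤ := -(2 * (n : ℤ)) + 3 with he
    have hne2n : (4:ℤ) ≤ 2 * (n:ℤ) := by exact_mod_cast (by omega : (4:ℕ) ≤ 2*n)
    have hc1 : c e = 1 := by have := hle e; omega
    -- adjacency zeros
    have hsupp1 : ∀ i : ℤ, i ∈ c.support → c i = 1 := by
      intro i hi
      have := hle i
      have := Finsupp.mem_support_iff.mp hi
      omega
    have hz1 : c (e + 1) = 0 := by
      have h' := hadj e (by omega)
      rw [hc1, Nat.mul_one] at h'
      exact h'
    have hz2 : c (e - 1) = 0 := by
      have h' := hadj (e - 1) (by omega)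
      rw [show e - 1 + 1 = e by ring, hc1, Nat.one_mul] at h'
      exact h'
    -- conjugate identity
    have hconj : ∑ i ∈ c.support, (c i : ℝ) * gc ^ i = N := conj_sum N c hrep
    set s := c.support with hs
    set f : ℤ → ℝ := fun i => (c i : ℝ) * gc ^ i with hf
    have hfe : ∀ i ∈ s, Even i → f i = goldenPhi ^ (-i) := by
      intro i hi hev
      simp only [hf, hsupp1 i hi, Nat.cast_one, one_mul, gc_zpow_even hev]
    have hfo : ∀ i ∈ s, Odd i → f i = -(goldenPhi ^ (-i)) := by
      intro i hi hod
      simp only [hf, hsupp1 i hi, Nat.cast_one, one_mul, gc_zpow_odd hod]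
    -- split into nonneg and neg positions
    set sp := s.filter (fun i => 0 ≤ i) with hsp
    set sn := s.filter (fun i => ¬ (0 ≤ i)) with hsn
    have hsplit : ∑ i ∈ sp, f i + ∑ i ∈ sn, f i = (N:ℝ) := by
      rw [hsp, hsn, Finset.sum_filter_add_sum_filter_not]
      exact hconj
    set P := ∑ i ∈ sp, f i with hP
    set AA := ∑ i ∈ sn, f i with hAA
    -- P bounds
    have hPub : P ≤ goldenPhi := by
      rw [hP, ← Finset.sum_filter_add_sum_filter_not sp (fun i => Even i)]
      have hodd : ∑ i ∈ sp.filter (fun i => ¬ Even i), f i ≤ 0 := by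
        apply Finset.sum_nonpos
        intro i hi
        obtain ⟨hi1, hi2⟩ := Finset.mem_filter.mp hi
        rw [hfo i (Finset.mem_filter.mp hi1).1 (Int.not_even_iff_odd.mp hi2)]
        exact neg_nonpos_of_nonneg (le_of_lt (gzpos _))
      have heven : ∑ i ∈ sp.filter (fun i => Even i), f i ≤ goldenPhi := by
        have hcongr : ∑ i ∈ sp.filter (fun i => Even i), f i
            = ∑ i ∈ sp.filter (fun i => Even i), goldenPhi ^ (-i) := by
          apply Finset.sum_congr rfl
          intro i hi
          obtain ⟨hi1, hi2⟩ := Finset.mem_filter.mp hi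
          exact hfe i (Finset.mem_filter.mp hi1).1 hi2
        rw [hcongr]
        have := sumA (sp.filter (fun i => Even i)) 0 (by
          intro i hi
          obtain ⟨hi1, hi2⟩ := Finset.mem_filter.mp hi
          have h0i : 0 ≤ i := (Finset.mem_filter.mp hi1).2
          exact ⟨by omega, by simpa using hi2⟩)
        simpa using this
      linarith
    have hPlb : -1 ≤ P := by
      rw [hP, ← Finset.sum_filter_add_sum_filter_not sp (fun i => Even i)]
      have heven : 0 ≤ ∑ i ∈ sp.filter (fun i => Even i), f i := by
        apply Finset.sum_nonneg
        intro i hi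
        obtain ⟨hi1, hi2⟩ := Finset.mem_filter.mp hi
        rw [hfe i (Finset.mem_filter.mp hi1).1 hi2]
        exact le_of_lt (gzpos _)
      have hodd : -1 ≤ ∑ i ∈ sp.filter (fun i => ¬ Even i), f i := by
        have hcongr : ∑ i ∈ sp.filter (fun i => ¬ Even i), f i
            = -∑ i ∈ sp.filter (fun i => ¬ Even i), goldenPhi ^ (-i) := by
          rw [← Finset.sum_neg_distrib]
          apply Finset.sum_congr rfl
          intro i hi
          obtain ⟨hi1, hi2⟩ := Finset.mem_filter.mp hi
          exact hfo i (Finset.mem_filter.mp hi1).1 (Int.not_even_iff_odd.mp hi2)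
        rw [hcongr]
        have := sumA (sp.filter (fun i => ¬ Even i)) (-1) (by
          intro i hi
          obtain ⟨hi1, hi2⟩ := Finset.mem_filter.mp hi
          have h0i : 0 ≤ i := (Finset.mem_filter.mp hi1).2
          have hodd' : Odd i := Int.not_even_iff_odd.mp hi2
          obtain ⟨m, hm⟩ := hodd'
          exact ⟨by omega, ⟨m, by omega⟩⟩)
        have h2 : goldenPhi ^ ((-1:ℤ) + 1) = 1 := by norm_num
        rw [h2] at this
        linarith
      linarith
    -- N bounds in real terms
    have hN2n : (lucas (2*n) : ℝ) = goldenPhi ^ ((2*n : ℕ):ℤ) + goldenPhi ^ (-((2*n:ℕ):ℤ)) := by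
      rw [lucas_real, gc_zpow_even (by exact_mod_cast even_two_mul (n:ℤ))]
    have hN2n1 : (lucas (2*n+1) : ℝ)
        = goldenPhi ^ ((2*n+1 : ℕ):ℤ) - goldenPhi ^ (-((2*n+1:ℕ):ℤ)) := by
      rw [lucas_real, gc_zpow_odd (by exact_mod_cast (by exact ⟨(n:ℤ), by ring⟩ : Odd (2*(n:ℤ)+1)))]
      ring
    have hcast1 : ((2*n : ℕ):ℤ) = 2*(n:ℤ) := by push_cast; ring
    have hcast2 : ((2*n+1 : ℕ):ℤ) = 2*(n:ℤ)+1 := by push_cast; ring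
    have hNlb : goldenPhi ^ (2*(n:ℤ)) + goldenPhi ^ (-(2*(n:ℤ))) + 1 ≤ (N:ℝ) := by
      have : (lucas (2*n) : ℝ) + 1 ≤ (N:ℝ) := by exact_mod_cast h1
      rw [hN2n, hcast1] at this
      linarith
    have hNub : (N:ℝ) ≤ goldenPhi ^ (2*(n:ℤ)+1) - goldenPhi ^ (-(2*(n:ℤ)+1)) := by
      have : (N:ℝ) ≤ (lucas (2*n+1) : ℝ) := by exact_mod_cast h2
      rw [hN2n1, hcast2] at this
      linarith
    have hAAlb : (N:ℝ) - goldenPhi ≤ AA := by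
      have := hsplit; linarith
    have hAAub : AA ≤ (N:ℝ) + 1 := by
      have := hsplit; linarith
    -- membership facts about sn
    have hsnmem : ∀ i ∈ sn, i ∈ s ∧ i < 0 := by
      intro i hi
      obtain ⟨h1', h2'⟩ := Finset.mem_filter.mp hi
      exact ⟨h1', by omega⟩
    have hmemsn : ∀ i : ℤ, c i = 1 → i < 0 → i ∈ sn := by
      intro i hci hio
      rw [hsn, Finset.mem_filter, hs]
      exact ⟨Finsupp.mem_support_iff.mpr (by omega), by omega⟩
    have hg2n : goldenPhi ≤ goldenPhi ^ (2*(n:ℤ)) := by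
      have := gmono (show (1:ℤ) ≤ 2*(n:ℤ) by omega)
      rwa [zpow_one] at this
    -- Step 3: no support below -2n
    have hlow : ∀ i ∈ sn, -(2*(n:ℤ)) ≤ i := by
      by_contra hcon
      push_neg at hcon
      obtain ⟨i0, hi0, hi0lt⟩ := hcon
      have hsne : sn.Nonempty := ⟨i0, hi0⟩
      set m := sn.min' hsne with hm
      have hmmem : m ∈ sn := Finset.min'_mem _ _
      have hmmin : ∀ i ∈ sn, m ≤ i := fun i hi => Finset.min'_le _ _ hi
      have hmlt : m < -(2*(n:ℤ)) := lt_of_le_of_lt (hmmin i0 hi0) hi0lt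
      have hcm : c m = 1 := hsupp1 m (hsnmem m hmmem).1
      have hmneg : m < 0 := (hsnmem m hmmem).2
      have hzm : c (m+1) = 0 := by
        have h' := hadj m (by omega)
        rw [hcm, Nat.mul_one] at h'
        exact h'
      have hRprop : ∀ i ∈ sn.erase m, m + 2 ≤ i ∧ i < 0 := by
        intro i hi
        have hiR := Finset.mem_erase.mp hi
        have his := hsnmem i hiR.2
        have h1' : m ≤ i := hmmin i hiR.2
        have h2' : i ≠ m + 1 := by
          intro hh
          have : c i = 1 := hsupp1 i his.1
          rw [hh] at this; omega
        exact ⟨by omega, his.2⟩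
      have hRs : ∀ i ∈ sn.erase m, i ∈ s := fun i hi => (hsnmem i (Finset.mem_erase.mp hi).2).1
      have hAAeq : AA = f m + ∑ i ∈ sn.erase m, f i := by
        rw [hAA, ← Finset.add_sum_erase _ f hmmem]
      have hgrec : goldenPhi ^ (-m) = goldenPhi ^ (-m-1) + goldenPhi ^ (-m-2) := by
        have := g_rec (-m-2)
        rw [show -m-2+2 = -m by ring, show -m-2+1 = -m-1 by ring] at this
        exact this
      rcases Int.even_or_odd m with hevm | hodm
      · -- m even : lower bound AA too large
        obtain ⟨w, hw⟩ := hevm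
        have hfm : f m = goldenPhi ^ (-m) := hfe m (hsnmem m hmmem).1 ⟨w, hw⟩
        have hevenpart : 0 ≤ ∑ i ∈ (sn.erase m).filter (fun i => Even i), f i := by
          apply Finset.sum_nonneg
          intro i hi
          obtain ⟨hi1, hi2⟩ := Finset.mem_filter.mp hi
          rw [hfe i (hRs i hi1) hi2]
          exact le_of_lt (gzpos _)
        have hoddpart : -(goldenPhi ^ (-m-2) - 1)
            ≤ ∑ i ∈ (sn.erase m).filter (fun i => ¬ Even i), f i := by
          have hcongr : ∑ i ∈ (sn.erase m).filter (fun i => ¬ Even i), f i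
              = -∑ i ∈ (sn.erase m).filter (fun i => ¬ Even i), goldenPhi ^ (-i) := by
            rw [← Finset.sum_neg_distrib]
            apply Finset.sum_congr rfl
            intro i hi
            obtain ⟨hi1, hi2⟩ := Finset.mem_filter.mp hi
            exact hfo i (hRs i hi1) (Int.not_even_iff_odd.mp hi2)
          have hb := sumB ((sn.erase m).filter (fun i => ¬ Even i)) 1 (-m-3)
            (by omega) (⟨-w-2, by omega⟩) (by
              intro i hi
              obtain ⟨hi1, hi2⟩ := Finset.mem_filter.mp hi
              obtain ⟨hge, hneg⟩ := hRprop i hi1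
              obtain ⟨u, hu⟩ := Int.not_even_iff_odd.mp hi2
              exact ⟨⟨by omega, by omega⟩, ⟨-w-1+u, by omega⟩⟩)
          rw [show (-m-3) + 1 = -m-2 by ring, show (1:ℤ) - 1 = 0 by ring, zpow_zero] at hb
          rw [hcongr]
          linarith
        have hsplitR : ∑ i ∈ sn.erase m, f i
            = ∑ i ∈ (sn.erase m).filter (fun i => Even i), f i
              + ∑ i ∈ (sn.erase m).filter (fun i => ¬ Even i), f i :=
          (Finset.sum_filter_add_sum_filter_not _ _ _).symm
        have hAAlarge : goldenPhi ^ (-m-1) + 1 ≤ AA := by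
          rw [hAAeq, hsplitR, hfm]
          have := hgrec
          linarith
        have hmono : goldenPhi ^ (2*(n:ℤ)+1) ≤ goldenPhi ^ (-m-1) :=
          gmono (by omega)
        have hgz := gzpos (-(2*(n:ℤ)+1))
        rw [zpow_neg] at hgz
        have : AA ≤ (N:ℝ) + 1 := hAAub
        have hNb := hNub
        rw [zpow_neg] at hNb
        linarith
      · -- m odd : AA negative
        obtain ⟨w, hw⟩ := hodm
        have hfm : f m = -(goldenPhi ^ (-m)) := hfo m (hsnmem m hmmem).1 ⟨w, hw⟩
        have hoddpart : ∑ i ∈ (sn.erase m).filter (fun i => ¬ Even i), f i ≤ 0 := by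
          apply Finset.sum_nonpos
          intro i hi
          obtain ⟨hi1, hi2⟩ := Finset.mem_filter.mp hi
          rw [hfo i (hRs i hi1) (Int.not_even_iff_odd.mp hi2)]
          exact neg_nonpos_of_nonneg (le_of_lt (gzpos _))
        have hevenpart : ∑ i ∈ (sn.erase m).filter (fun i => Even i), f i
            ≤ goldenPhi ^ (-m-2) := by
          have hcongr : ∑ i ∈ (sn.erase m).filter (fun i => Even i), f i
              = ∑ i ∈ (sn.erase m).filter (fun i => Even i), goldenPhi ^ (-i) := by
            apply Finset.sum_congr rfl
            intro i hi
            obtain ⟨hi1, hi2⟩ := Finset.mem_filter.mp hi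
            exact hfe i (hRs i hi1) hi2
          have hb := sumA ((sn.erase m).filter (fun i => Even i)) (-m-3) (by
            intro i hi
            obtain ⟨hi1, hi2⟩ := Finset.mem_filter.mp hi
            obtain ⟨hge, hneg⟩ := hRprop i hi1
            obtain ⟨u, hu⟩ := hi2
            exact ⟨by omega, ⟨u-w-2, by omega⟩⟩)
          rw [show (-m-3) + 1 = -m-2 by ring] at hb
          rw [hcongr]
          linarith
        have hsplitR : ∑ i ∈ sn.erase m, f i
            = ∑ i ∈ (sn.erase m).filter (fun i => Even i), f i
              + ∑ i ∈ (sn.erase m).filter (fun i => ¬ Even i), f i :=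
          (Finset.sum_filter_add_sum_filter_not _ _ _).symm
        have hAAneg : AA ≤ -(goldenPhi ^ (-m-1)) := by
          rw [hAAeq, hsplitR, hfm]
          have := hgrec
          linarith
        have hgz1 := gzpos (-m-1)
        have hgz2 := gzpos (-(2*(n:ℤ)))
        have := hAAlb
        linarith
    -- Step 4: main contradiction
    have hodde : Odd e := ⟨1 - (n:ℤ), by omega⟩
    have hein : e ∈ sn := hmemsn e hc1 (by omega)
    have hAAeq : AA = f e + ∑ i ∈ sn.erase e, f i := by
      rw [hAA, ← Finset.add_sum_erase _ f hein]
    have hfeval : f e = -(goldenPhi ^ (2*(n:ℤ)-3)) := by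
      rw [hfo e (hsnmem e hein).1 hodde, show -e = 2*(n:ℤ)-3 by omega]
    have hRs : ∀ i ∈ sn.erase e, i ∈ s := fun i hi => (hsnmem i (Finset.mem_erase.mp hi).2).1
    have hoddpart : ∑ i ∈ (sn.erase e).filter (fun i => ¬ Even i), f i ≤ 0 := by
      apply Finset.sum_nonpos
      intro i hi
      obtain ⟨hi1, hi2⟩ := Finset.mem_filter.mp hi
      rw [hfo i (hRs i hi1) (Int.not_even_iff_odd.mp hi2)]
      exact neg_nonpos_of_nonneg (le_of_lt (gzpos _))
    have hevenpart : ∑ i ∈ (sn.erase e).filter (fun i => Even i), f i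
        ≤ goldenPhi ^ (2*(n:ℤ)) + goldenPhi ^ (2*(n:ℤ)-5) := by
      have hcongr : ∑ i ∈ (sn.erase e).filter (fun i => Even i), f i
          = ∑ i ∈ (sn.erase e).filter (fun i => Even i), goldenPhi ^ (-i) := by
        apply Finset.sum_congr rfl
        intro i hi
        obtain ⟨hi1, hi2⟩ := Finset.mem_filter.mp hi
        exact hfe i (hRs i hi1) hi2
      rw [hcongr]
      set E := (sn.erase e).filter (fun i => Even i) with hE
      have hsmall : ∑ i ∈ E.erase (-(2*(n:ℤ))), goldenPhi ^ (-i)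
          ≤ goldenPhi ^ (2*(n:ℤ)-5) := by
        have hb := sumA (E.erase (-(2*(n:ℤ)))) (2*(n:ℤ)-6) (by
          intro i hi
          obtain ⟨hne', hiE⟩ := Finset.mem_erase.mp hi
          obtain ⟨hi1, hi2⟩ := Finset.mem_filter.mp hiE
          obtain ⟨hne2, hisn⟩ := Finset.mem_erase.mp hi1
          have hgelow : -(2*(n:ℤ)) ≤ i := hlow i hisn
          have hineg : i < 0 := (hsnmem i hisn).2
          have hci : c i = 1 := hsupp1 i (hsnmem i hisn).1
          have hne3 : i ≠ e + 1 := by intro hh; rw [hh] at hci; omega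
          have hne4 : i ≠ e - 1 := by intro hh; rw [hh] at hci; omega
          obtain ⟨u, hu⟩ := hi2
          exact ⟨by omega, ⟨(n:ℤ)-3+u, by omega⟩⟩)
        rw [show 2*(n:ℤ)-6+1 = 2*(n:ℤ)-5 by ring] at hb
        exact hb
      by_cases hmem : -(2*(n:ℤ)) ∈ E
      · have := (Finset.add_sum_erase E (fun i => goldenPhi ^ (-i)) hmem).symm
        rw [this, show -(-(2*(n:ℤ))) = 2*(n:ℤ) by ring]
        linarith
      · rw [Finset.erase_eq_of_notMem hmem] at hsmall
        have := gzpos (2*(n:ℤ))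
        linarith
    have hsplitR : ∑ i ∈ sn.erase e, f i
        = ∑ i ∈ (sn.erase e).filter (fun i => Even i), f i
          + ∑ i ∈ (sn.erase e).filter (fun i => ¬ Even i), f i :=
      (Finset.sum_filter_add_sum_filter_not _ _ _).symm
    have hAAfinal : AA ≤ -(goldenPhi ^ (2*(n:ℤ)-3)) + goldenPhi ^ (2*(n:ℤ))
        + goldenPhi ^ (2*(n:ℤ)-5) := by
      rw [hAAeq, hsplitR, hfeval]
      linarith
    have hgrec3 : goldenPhi ^ (2*(n:ℤ)-3) = goldenPhi ^ (2*(n:ℤ)-4) + goldenPhi ^ (2*(n:ℤ)-5) := by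
      have := g_rec (2*(n:ℤ)-5)
      rw [show 2*(n:ℤ)-5+2 = 2*(n:ℤ)-3 by ring, show 2*(n:ℤ)-5+1 = 2*(n:ℤ)-4 by ring] at this
      exact this
    have hone : (1:ℝ) ≤ goldenPhi ^ (2*(n:ℤ)-4) := by
      have := gmono (show (0:ℤ) ≤ 2*(n:ℤ)-4 by omega)
      rwa [zpow_zero] at this
    have hgzn := gzpos (-(2*(n:ℤ)))
    have hglt2 := g_lt_two
    linarith [hAAlb, hNlb]
  -- conclude from key
  unfold canonicalRep
  split_ifs with hA
  · exact key _ hA.choose_spec.1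
  · unfold bergmanRep
    split_ifs with hB
    · exact key _ ⟨hB.choose_spec.1, fun i _ => hB.choose_spec.2 i⟩
    · simp
end
end
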